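/- arXiv:2406.19252 — 4 statements merged into one kernel-verified Lean document; each statement's English description precedes it below -/
import Mathlib

section
/- Let n ≥ 1, let 0 < β ≤ 1 ≤ α, and let E ⊆ 𝔻ⁿ be a discrete set that is α-separated and β-well-approximated. Then the upper box dimension of L(E) is at least δ(E) − 2(nα − (n−1)β − 1). -/
/-!
Cut `E` into the dyadic shells `E_k = {x ∈ E : 2^-(k+1) < 1 - |x| ≤ 2^-k}`. By α-separation the
points of `E_k` are `≍ 2^(-kα)`-separated, and by β-well-approximation each lies within
`δ_k = c₂ 2^(-kβ)` of `L(E)`. A maximal `2δ_k`-separated set of these nearby limit points is a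
`δ_k`-packing of `L(E)`, and a volume count shows that each of its points is close to at most
`≍ 2^(kn(α-β))` points of `E_k`; hence `N_{δ_k}(L(E)) ≳ #E_k 2^(-kn(α-β))`. If `σ < δ(E)`, the
accumulation series at exponent `σ` diverges, so `#E_k > 2^(kσ)` for infinitely many `k`, giving
`dim_B L(E) ≥ (σ - n(α-β))/β`. For `n ≥ 2` this is at least `σ - 2(nα - (n-1)β - 1)` whenever
the latter is positive. For `n = 1` a shell has length `≍ 2^-k`, so `#E_k ≲ 2^(k(α-1))` and
`δ(E) ≤ α - 1`, which makes the claim trivial.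
-/

open Metric Set Filter
open scoped ENNReal NNReal

noncomputable section

/-- Points of `ℝⁿ` (Euclidean space). -/
abbrev Pt (n : ℕ) := EuclideanSpace ℝ (Fin n)

/-- `E` is a discrete set: every point of `E` is isolated in `E`. -/
def IsDiscreteSet {n : ℕ} (E : Set (Pt n)) : Prop :=
  ∀ x ∈ E, ∃ r > 0, closedBall x r ∩ E = {x}

/-- The limit set `L(E) = cl(E) \ E`. -/
def limitSet {n : ℕ} (E : Set (Pt n)) : Set (Pt n) := closure E \ E

/-- `E ⊆ 𝔻ⁿ` is separated. -/
def SeparatedSet {n : ℕ} (E : Set (Pt n)) : Prop :=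
  ∃ c₁ : ℝ, 0 < c₁ ∧ c₁ < 1 ∧ ∀ x ∈ E, closedBall x (c₁ * (1 - ‖x‖)) ∩ E = {x}

/-- `E ⊆ 𝔻ⁿ` is well-approximated. -/
def WellApproximated {n : ℕ} (E : Set (Pt n)) : Prop :=
  ∃ c₂ : ℝ, 1 ≤ c₂ ∧ ∀ x ∈ E, ∃ z ∈ limitSet E, dist x z ≤ c₂ * (1 - ‖x‖)

/-- `E` is `α`-separated. -/
def AlphaSeparated {n : ℕ} (E : Set (Pt n)) (α : ℝ) : Prop :=
  ∃ c₁ : ℝ, 0 < c₁ ∧ ∀ x ∈ E, closedBall x (c₁ * (1 - ‖x‖) ^ α) ∩ E = {x}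

/-- `E` is `β`-well-approximated. -/
def BetaWellApproximated {n : ℕ} (E : Set (Pt n)) (β : ℝ) : Prop :=
  ∃ c₂ : ℝ, 1 ≤ c₂ ∧ ∀ x ∈ E, ∃ z ∈ limitSet E, dist x z ≤ c₂ * (1 - ‖x‖) ^ β

/-- The accumulation series `S_E(s) = ∑_{x ∈ E} (1 - |x|)^s` (valued in `ℝ≥0∞`). -/
def accSeries {n : ℕ} (E : Set (Pt n)) (s : ℝ) : ℝ≥0∞ :=
  ∑' x : E, ENNReal.ofReal ((1 - ‖(x : Pt n)‖) ^ s)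

/-- The critical exponent `δ(E) = inf { s ≥ 0 : S_E(s) < ∞ }`, with `inf ∅ = ∞`. -/
def critExp {n : ℕ} (E : Set (Pt n)) : ℝ≥0∞ :=
  ⨅ (s : ℝ≥0) (_ : accSeries E (s : ℝ) < ⊤), (s : ℝ≥0∞)

/-- The set of `c`-radial limit points of `E`. -/
def radialPoints {n : ℕ} (E : Set (Pt n)) (c : ℝ) : Set (Pt n) :=
  {z | ‖z‖ = 1 ∧ ∀ r > 0, ∃ x ∈ E,
    dist x z ≤ c * (1 - ‖x‖) ∧ c * (1 - ‖x‖) ≤ c * r}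

/-- The radial limit set `L_rad(E) = ⋃_{c ≥ 1} L_c(E)`. -/
def radialLimitSet {n : ℕ} (E : Set (Pt n)) : Set (Pt n) :=
  ⋃ c ∈ Ici (1 : ℝ), radialPoints E c

/-- The set of `(γ, c)`-radial limit points of `E`. -/
def gammaRadialPoints {n : ℕ} (E : Set (Pt n)) (γ c : ℝ) : Set (Pt n) :=
  {z | z ∈ limitSet E ∧ ∀ r > 0, ∃ x ∈ E,
    dist x z ≤ c * (1 - ‖x‖) ^ γ ∧ c * (1 - ‖x‖) ^ γ ≤ c * r ^ γ}

/-- The `γ`-radial limit set `L_rad^γ(E) = ⋃_{c ≥ 1} L_c^γ(E)`. -/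
def gammaRadialLimitSet {n : ℕ} (E : Set (Pt n)) (γ : ℝ) : Set (Pt n) :=
  ⋃ c ∈ Ici (1 : ℝ), gammaRadialPoints E γ c

/-- The packing number `N_δ(F)`: the maximal cardinality of a packing of `F` by
pairwise disjoint closed balls of radius `δ` centred in `F`. -/
def packingNumber {n : ℕ} (F : Set (Pt n)) (δ : ℝ) : ℕ∞ :=
  ⨆ (Z : Finset (Pt n)) (_ : ↑Z ⊆ F)
    (_ : (Z : Set (Pt n)).PairwiseDisjoint fun x => closedBall x δ), (Z.card : ℕ∞)

/-- The upper box dimension `limsup_{δ → 0⁺} log N_δ(F) / (-log δ)`. -/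
def upperBoxDim {n : ℕ} (F : Set (Pt n)) : ℝ≥0∞ :=
  limsup (fun δ : ℝ =>
    ENNReal.ofReal (Real.log ((packingNumber F δ).toNat : ℝ) / (-Real.log δ)))
    (nhdsWithin 0 (Ioi 0))

/-- The lower box dimension `liminf_{δ → 0⁺} log N_δ(F) / (-log δ)`. -/
def lowerBoxDim {n : ℕ} (F : Set (Pt n)) : ℝ≥0∞ :=
  liminf (fun δ : ℝ =>
    ENNReal.ofReal (Real.log ((packingNumber F δ).toNat : ℝ) / (-Real.log δ)))
    (nhdsWithin 0 (Ioi 0))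


open MeasureTheory Module Topology

section VolumeCounting

variable {E : Type*} [NormedAddCommGroup E] [NormedSpace ℝ E] [FiniteDimensional ℝ E]

lemma addHaar_biUnion_closedBall [MeasurableSpace E] [BorelSpace E] (μ : Measure E)
    [μ.IsAddHaarMeasure] {S : Finset E} {r : ℝ} (hr : 0 < r)
    (hS : (S : Set E).Pairwise fun x y => 2 * r < dist x y) :
    μ (⋃ x ∈ S, closedBall x r) = ENNReal.ofReal (S.card * r ^ finrank ℝ E) * μ (ball 0 1) := by
  rw [measure_biUnion_finset (fun x hx y hy hxy => closedBall_disjoint_closedBall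
      (by linarith [hS hx hy hxy])) fun _ _ => measurableSet_closedBall,
    ENNReal.ofReal_mul (by positivity), ENNReal.ofReal_natCast, mul_assoc]
  simp only [μ.addHaar_closedBall _ hr.le, Finset.sum_const, nsmul_eq_mul]

lemma le_of_ofReal_mul_addHaar_unitBall_le [MeasurableSpace E] [BorelSpace E] (μ : Measure E)
    [μ.IsAddHaarMeasure] {x y : ℝ} (hy : 0 ≤ y)
    (h : ENNReal.ofReal x * μ (ball 0 1) ≤ ENNReal.ofReal y * μ (ball 0 1)) : x ≤ y := by
  rwa [ENNReal.mul_le_mul_iff_left (measure_ball_pos μ (0 : E) one_pos).ne' measure_ball_lt_top.ne,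
    ENNReal.ofReal_le_ofReal_iff hy] at h

lemma card_mul_pow_le_of_subset_closedBall {S : Finset E} {w : E} {r R : ℝ} (hr : 0 < r)
    (hR : 0 ≤ R) (hS : ∀ x ∈ S, x ∈ closedBall w R)
    (hsep : (S : Set E).Pairwise fun x y => 2 * r < dist x y) :
    S.card * r ^ finrank ℝ E ≤ (R + r) ^ finrank ℝ E := by
  borelize E
  refine le_of_ofReal_mul_addHaar_unitBall_le (Measure.addHaar : Measure E) (by positivity) ?_
  rw [← addHaar_biUnion_closedBall _ hr hsep, ← Measure.addHaar_closedBall _ w (by positivity)]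
  exact measure_mono <| iUnion₂_subset fun x hx =>
    closedBall_subset_closedBall' (by linarith [mem_closedBall.1 (hS x hx)])

lemma finite_of_pairwise_lt_dist_of_subset_closedBall {S : Set E} {w : E} {r R : ℝ}
    (hr : 0 < r) (hR : 0 ≤ R) (hS : S ⊆ closedBall w R)
    (hsep : S.Pairwise fun x y => 2 * r < dist x y) : S.Finite := by
  by_contra hinf
  obtain ⟨T, hTS, hT⟩ :=
    Set.Infinite.exists_subset_card_eq hinf (⌈((R + r) / r) ^ finrank ℝ E⌉₊ + 1)
  have hcard := card_mul_pow_le_of_subset_closedBall hr hR (fun x hx => hS (hTS hx))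
    (hsep.mono hTS)
  rw [← le_div_iff₀ (by positivity), ← div_pow, hT, Nat.cast_add_one] at hcard
  linarith [Nat.le_ceil (((R + r) / r) ^ finrank ℝ E)]

/-- The balls of radius `r` around `S` and the ball of radius `a - r` about the origin are
disjoint and fill part of the ball of radius `b + r`. -/
lemma card_mul_pow_add_pow_le_of_subset_annulus {S : Finset E} {r a b : ℝ} (hr : 0 < r)
    (hra : r < a) (hab : a ≤ b) (hS : ∀ x ∈ S, a ≤ ‖x‖ ∧ ‖x‖ ≤ b)
    (hsep : (S : Set E).Pairwise fun x y => 2 * r < dist x y) :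
    S.card * r ^ finrank ℝ E + (a - r) ^ finrank ℝ E ≤ (b + r) ^ finrank ℝ E := by
  borelize E
  have hdisj : Disjoint (⋃ x ∈ S, closedBall x r) (ball (0 : E) (a - r)) := by
    refine disjoint_iUnion₂_left.2 fun x hx => closedBall_disjoint_ball ?_
    rw [dist_zero_right]; linarith [(hS x hx).1]
  have hsub : (⋃ x ∈ S, closedBall x r) ∪ ball (0 : E) (a - r) ⊆ closedBall 0 (b + r) := by
    refine union_subset (iUnion₂_subset fun x hx => closedBall_subset_closedBall' ?_)
      (ball_subset_closedBall.trans (closedBall_subset_closedBall (by linarith)))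
    rw [dist_zero_right]; linarith [(hS x hx).2]
  refine le_of_ofReal_mul_addHaar_unitBall_le (Measure.addHaar : Measure E)
    (pow_nonneg (by linarith) _) ?_
  rw [ENNReal.ofReal_add (by positivity) (by positivity), add_mul,
    ← addHaar_biUnion_closedBall _ hr hsep, ← Measure.addHaar_ball_of_pos _ _ (by linarith),
    ← measure_union hdisj measurableSet_ball, ← Measure.addHaar_closedBall _ _ (by linarith)]
  exact measure_mono hsub

end VolumeCounting

lemma Set.Finite.exists_finset_pairwise_lt_dist_cover {X : Type*} [PseudoMetricSpace X]
    {A : Set X} (hA : A.Finite) {ρ : ℝ} (hρ : 0 ≤ ρ) :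
    ∃ Z : Finset X, ↑Z ⊆ A ∧ (Z : Set X).Pairwise (fun u v => ρ < dist u v) ∧
      ∀ a ∈ A, ∃ w ∈ Z, dist a w ≤ ρ := by
  set Z := Metric.maximalSeparatedSet ρ.toNNReal A
  have hZ : Z.Finite := hA.subset Metric.maximalSeparatedSet_subset
  refine ⟨hZ.toFinset, by simpa using Metric.maximalSeparatedSet_subset, fun u hu v hv huv => ?_,
    fun a ha => ?_⟩
  · have : (ρ.toNNReal : ℝ≥0∞) < edist u v :=
      Metric.isSeparated_maximalSeparatedSet (hZ.mem_toFinset.1 hu) (hZ.mem_toFinset.1 hv) huv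
    rwa [edist_dist, ← ENNReal.ofReal, ENNReal.ofReal_lt_ofReal_iff_of_nonneg hρ] at this
  · have := (Metric.isCover_maximalSeparatedSet (ε := ρ.toNNReal)
      ((Metric.packingNumber_le_encard_self A).trans_lt hA.encard_lt_top).ne
      ).subset_iUnion_closedBall ha
    simp only [mem_iUnion, mem_closedBall, Real.coe_toNNReal _ hρ] at this
    obtain ⟨w, hw, hdist⟩ := this
    exact ⟨w, hZ.mem_toFinset.2 hw, hdist⟩

section Packing

variable {n : ℕ}

lemma packingNumber_ne_top {F : Set (Pt n)} (hF : Bornology.IsBounded F) {δ : ℝ} (hδ : 0 < δ) :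
    packingNumber F δ ≠ ⊤ := by
  obtain ⟨R, hR⟩ := (isBounded_iff_subset_closedBall 0).1 hF
  refine ne_top_of_le_ne_top (ENat.natCast_ne_top ⌈((max R 0 + δ) / δ) ^ n⌉₊) ?_
  refine iSup₂_le fun Z hZF => iSup_le fun hZ => ?_
  have hcard := card_mul_pow_le_of_subset_closedBall hδ (le_max_right R 0)
    (fun x hx => closedBall_subset_closedBall (le_max_left R 0) (hR (hZF hx)))
    fun x hx y hy hxy => by
      simpa [two_mul] using (disjoint_closedBall_closedBall_iff hδ.le hδ.le).1 (hZ hx hy hxy)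
  rw [finrank_euclideanSpace_fin, ← le_div_iff₀ (by positivity), ← div_pow] at hcard
  exact_mod_cast hcard.trans (Nat.le_ceil _)

lemma card_le_toNat_packingNumber {F : Set (Pt n)} (hF : Bornology.IsBounded F) {δ : ℝ}
    (hδ : 0 < δ) {Z : Finset (Pt n)} (hZF : ↑Z ⊆ F)
    (hZ : (Z : Set (Pt n)).Pairwise fun x y => 2 * δ < dist x y) :
    Z.card ≤ (packingNumber F δ).toNat := by
  have hle : (Z.card : ℕ∞) ≤ packingNumber F δ := le_iSup₂_of_le Z hZF <| le_iSup_of_le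
    (fun x hx y hy hxy => closedBall_disjoint_closedBall (by linarith [hZ hx hy hxy])) le_rfl
  simpa using ENat.toNat_le_toNat hle (packingNumber_ne_top hF hδ)

/-- A maximal `2δ`-separated subset of the `δ`-approximations of the points of `S` packs `L`,
and each of its points is `3δ`-close to at most `(4δ/r)ⁿ` points of the `2r`-separated set `S`. -/
lemma card_mul_pow_le_toNat_packingNumber {L : Set (Pt n)} (hL : Bornology.IsBounded L)
    {S : Finset (Pt n)} {r δ : ℝ} (hr : 0 < r) (hrδ : r ≤ δ)
    (hsep : (S : Set (Pt n)).Pairwise fun x y => 2 * r < dist x y)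
    (happrox : ∀ x ∈ S, ∃ z ∈ L, dist x z ≤ δ) :
    (S.card : ℝ) * (r / (4 * δ)) ^ n ≤ (packingNumber L δ).toNat := by
  classical
  have hδ : 0 < δ := hr.trans_le hrδ
  choose! f hfL hf using happrox
  obtain ⟨Z, hZS, hZsep, hZcover⟩ :=
    (S.finite_toSet.image f).exists_finset_pairwise_lt_dist_cover (by positivity : 0 ≤ 2 * δ)
  set cluster := fun w => S.filter fun x => dist x w ≤ 3 * δ
  have hcover : S ⊆ Z.biUnion cluster := by
    intro x hx
    obtain ⟨w, hw, hdist⟩ := hZcover (f x) (mem_image_of_mem f hx)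
    refine Finset.mem_biUnion.2 ⟨w, hw, Finset.mem_filter.2 ⟨hx, ?_⟩⟩
    linarith [dist_triangle x (f x) w, hf x hx]
  have hcluster : ∀ w ∈ Z, ((cluster w).card : ℝ) * (r / (4 * δ)) ^ n ≤ 1 := by
    intro w _
    have := card_mul_pow_le_of_subset_closedBall hr (by linarith) (w := w) (R := 3 * δ)
      (fun x hx => mem_closedBall.2 (Finset.mem_filter.1 hx).2)
      (hsep.mono (Finset.coe_subset.2 (Finset.filter_subset _ S)))
    rw [finrank_euclideanSpace_fin] at this
    rw [div_pow, ← mul_div_assoc, div_le_one (by positivity)]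
    exact this.trans (pow_le_pow_left₀ (by linarith) (by linarith) n)
  have hpack : Z.card ≤ (packingNumber L δ).toNat := by
    refine card_le_toNat_packingNumber hL hδ (fun w hw => ?_) hZsep
    obtain ⟨x, hx, rfl⟩ := hZS hw
    exact hfL x hx
  calc (S.card : ℝ) * (r / (4 * δ)) ^ n
      ≤ (∑ w ∈ Z, ((cluster w).card : ℝ)) * (r / (4 * δ)) ^ n := by
        gcongr
        exact_mod_cast (Finset.card_le_card hcover).trans Finset.card_biUnion_le
    _ ≤ Z.card := by
        simpa [Finset.sum_mul] using Finset.sum_le_card_nsmul _ _ _ hcluster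
    _ ≤ (packingNumber L δ).toNat := by exact_mod_cast hpack

end Packing

lemma ofReal_le_upperBoxDim_of_frequently {n : ℕ} {F : Set (Pt n)} {C t : ℝ} (hC : 0 < C)
    (h : ∃ᶠ δ in 𝓝[>] 0, C * δ ^ (-t) ≤ (packingNumber F δ).toNat) :
    ENNReal.ofReal t ≤ upperBoxDim F := by
  refine le_of_forall_lt_imp_le_of_dense fun c hc => ?_
  have ht : c.toReal < t := ENNReal.toReal_lt_of_lt_ofReal hc
  rw [← ENNReal.ofReal_toReal hc.ne_top]
  have hlog : Tendsto (fun δ => -Real.log δ) (𝓝[>] 0) atTop :=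
    tendsto_neg_atBot_atTop.comp Real.tendsto_log_nhdsGT_zero
  have hlarge : ∀ᶠ δ in 𝓝[>] (0 : ℝ),
      0 < -Real.log δ ∧ c.toReal * -Real.log δ ≤ Real.log C + t * -Real.log δ := by
    filter_upwards [hlog.eventually_gt_atTop 0,
      hlog.eventually_ge_atTop (-Real.log C / (t - c.toReal))] with δ hpos hge
    rw [div_le_iff₀ (by linarith)] at hge
    exact ⟨hpos, by linarith⟩
  refine le_limsup_of_frequently_le ((h.and_eventually (hlarge.and self_mem_nhdsWithin)).mono ?_)
  rintro δ ⟨hN, ⟨hpos, hlin⟩, hδ⟩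
  refine ENNReal.ofReal_le_ofReal ((le_div_iff₀ hpos).2 ?_)
  calc c.toReal * -Real.log δ ≤ Real.log C + t * -Real.log δ := hlin
    _ = Real.log (C * δ ^ (-t)) := by
        rw [Real.log_mul hC.ne' (Real.rpow_pos_of_pos hδ _).ne', Real.log_rpow hδ]; ring
    _ ≤ Real.log ((packingNumber F δ).toNat) :=
        Real.log_le_log (mul_pos hC (Real.rpow_pos_of_pos hδ _)) hN

section DyadicShells

variable {n : ℕ} {E : Set (Pt n)}

def dyadicShell (E : Set (Pt n)) (k : ℕ) : Set (Pt n) :=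
  {x ∈ E | (2 : ℝ)⁻¹ ^ (k + 1) < 1 - ‖x‖ ∧ 1 - ‖x‖ ≤ (2 : ℝ)⁻¹ ^ k}

lemma iUnion_dyadicShell (hE : E ⊆ ball 0 1) : ⋃ k, dyadicShell E k = E := by
  refine subset_antisymm (iUnion_subset fun k x hx => hx.1) fun x hx => ?_
  have hx1 : ‖x‖ < 1 := mem_ball_zero_iff.1 (hE hx)
  obtain ⟨k, hk⟩ := exists_nat_pow_near_of_lt_one (sub_pos.2 hx1) (sub_le_self 1 (norm_nonneg x))
    (by norm_num : (0 : ℝ) < 2⁻¹) (by norm_num)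
  exact mem_iUnion.2 ⟨k, hx, hk⟩

lemma accSeries_le_tsum_dyadicShell (hE : E ⊆ ball 0 1) {s : ℝ} (hs : 0 ≤ s) :
    accSeries E s ≤
      ∑' k, (dyadicShell E k).encard * ENNReal.ofReal (((2 : ℝ)⁻¹ ^ k) ^ s) := by
  set f := fun y : Pt n => ENNReal.ofReal ((1 - ‖y‖) ^ s)
  rw [accSeries, ← tsum_congr_set_coe f (iUnion_dyadicShell hE)]
  refine (ENNReal.tsum_iUnion_le_tsum f _).trans (ENNReal.tsum_le_tsum fun k => ?_)
  rw [← ENNReal.tsum_set_const]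
  exact ENNReal.tsum_le_tsum fun x => ENNReal.ofReal_le_ofReal <|
    Real.rpow_le_rpow (by linarith [x.2.2.1, pow_pos (by norm_num : (0 : ℝ) < 2⁻¹) (k + 1)])
      x.2.2.2 hs

lemma accSeries_lt_top_of_eventually_ncard_le (hE : E ⊆ ball 0 1)
    (hfin : ∀ k, (dyadicShell E k).Finite) {C σ s : ℝ} (hs : 0 ≤ s) (hσs : σ < s)
    (h : ∀ᶠ k in atTop, ((dyadicShell E k).ncard : ℝ) ≤ C * ((2 : ℝ)⁻¹ ^ k) ^ (-σ)) :
    accSeries E s < ⊤ := by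
  have hq : (2 : ℝ)⁻¹ ^ (s - σ) < 1 := Real.rpow_lt_one (by norm_num) (by norm_num) (by linarith)
  have hsum : Summable fun k => ((dyadicShell E k).ncard : ℝ) * ((2 : ℝ)⁻¹ ^ k) ^ s := by
    refine .of_norm_bounded_eventually_nat
      ((summable_geometric_of_lt_one (by positivity) hq).mul_left C) (h.mono fun k hk => ?_)
    have hρ : (0 : ℝ) < (2 : ℝ)⁻¹ ^ k := by positivity
    rw [Real.norm_of_nonneg (by positivity), Real.rpow_pow_comm (by norm_num),
      show s - σ = -σ + s by ring, Real.rpow_add hρ, ← mul_assoc]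
    exact mul_le_mul_of_nonneg_right hk (by positivity)
  calc accSeries E s
      ≤ ∑' k, (dyadicShell E k).encard * ENNReal.ofReal (((2 : ℝ)⁻¹ ^ k) ^ s) :=
        accSeries_le_tsum_dyadicShell hE hs
    _ = ENNReal.ofReal (∑' k, ((dyadicShell E k).ncard : ℝ) * ((2 : ℝ)⁻¹ ^ k) ^ s) := by
        rw [ENNReal.ofReal_tsum_of_nonneg (fun k => by positivity) hsum]
        congr 1 with k
        rw [ENNReal.ofReal_mul (by positivity), ENNReal.ofReal_natCast, ← (hfin k).cast_ncard_eq,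
          ENat.toENNReal_coe]
    _ < ⊤ := ENNReal.ofReal_lt_top

lemma critExp_le_of_accSeries_lt_top {s : ℝ≥0} (h : accSeries E s < ⊤) : critExp E ≤ s :=
  iInf₂_le s h

lemma critExp_le_of_eventually_ncard_le (hE : E ⊆ ball 0 1)
    (hfin : ∀ k, (dyadicShell E k).Finite) {C : ℝ} {σ : ℝ≥0}
    (h : ∀ᶠ k in atTop, ((dyadicShell E k).ncard : ℝ) ≤ C * ((2 : ℝ)⁻¹ ^ k) ^ (-(σ : ℝ))) :
    critExp E ≤ σ :=
  ENNReal.le_of_forall_pos_le_add fun ε hε _ => by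
    exact_mod_cast critExp_le_of_accSeries_lt_top (s := σ + ε)
      (accSeries_lt_top_of_eventually_ncard_le hE hfin (by positivity)
        (by simpa using hε) h)

lemma frequently_lt_ncard_of_lt_critExp (hE : E ⊆ ball 0 1)
    (hfin : ∀ k, (dyadicShell E k).Finite) {σ : ℝ≥0} (h : (σ : ℝ≥0∞) < critExp E) :
    ∃ᶠ k in atTop, ((2 : ℝ)⁻¹ ^ k) ^ (-(σ : ℝ)) < (dyadicShell E k).ncard := by
  contrapose! h
  exact critExp_le_of_eventually_ncard_le hE hfin (C := 1) (by simpa using h)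

end DyadicShells

lemma AlphaSeparated.exists_lt_dist {n : ℕ} {E : Set (Pt n)} {α : ℝ} (h : AlphaSeparated E α)
    (hE : E ⊆ ball 0 1) :
    ∃ c, 0 < c ∧ c ≤ 1 ∧ ∀ x ∈ E, ∀ y ∈ E, y ≠ x → c * (1 - ‖x‖) ^ α < dist y x := by
  obtain ⟨c, hc, hball⟩ := h
  refine ⟨min c 1, lt_min hc one_pos, min_le_right c 1, fun x hx y hy hyx => ?_⟩
  have hxy : y ∉ closedBall x (c * (1 - ‖x‖) ^ α) := fun hmem =>
    hyx (by rw [← mem_singleton_iff, ← hball x hx]; exact ⟨hmem, hy⟩)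
  have hρ : 0 ≤ (1 - ‖x‖) ^ α :=
    Real.rpow_nonneg (by linarith [mem_ball_zero_iff.1 (hE hx)]) α
  calc min c 1 * (1 - ‖x‖) ^ α ≤ c * (1 - ‖x‖) ^ α := by gcongr; exact min_le_left c 1
    _ < dist y x := not_le.1 hxy

section SeparatedShells

variable {n : ℕ} {E : Set (Pt n)} {c α : ℝ}
  (hsep : ∀ x ∈ E, ∀ y ∈ E, y ≠ x → c * (1 - ‖x‖) ^ α < dist y x)
include hsep

lemma dyadicShell_pairwise_lt_dist (hc : 0 ≤ c) (hα : 0 ≤ α) {k : ℕ} {r : ℝ}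
    (hr : 2 * r ≤ c * ((2 : ℝ)⁻¹ ^ (k + 1)) ^ α) :
    (dyadicShell E k).Pairwise fun x y => 2 * r < dist x y := by
  intro x hx y hy hxy
  calc 2 * r ≤ c * ((2 : ℝ)⁻¹ ^ (k + 1)) ^ α := hr
    _ ≤ c * (1 - ‖y‖) ^ α := by gcongr; exact hy.2.1.le
    _ < dist x y := hsep y hy.1 x hx.1 hxy

lemma dyadicShell_finite (hE : E ⊆ ball 0 1) (hc : 0 < c) (hα : 0 ≤ α) (k : ℕ) :
    (dyadicShell E k).Finite :=
  finite_of_pairwise_lt_dist_of_subset_closedBall (by positivity) zero_le_one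
    (fun x hx => ball_subset_closedBall (hE hx.1))
    (dyadicShell_pairwise_lt_dist hsep hc.le hα (r := c * ((2 : ℝ)⁻¹ ^ (k + 1)) ^ α / 2)
      (le_of_eq (by ring)))

end SeparatedShells

section DimensionOne

variable {E : Set (Pt 1)} {c α : ℝ}
  (hsep : ∀ x ∈ E, ∀ y ∈ E, y ≠ x → c * (1 - ‖x‖) ^ α < dist y x)
include hsep

lemma ncard_dyadicShell_le_of_dim_one (hE : E ⊆ ball 0 1) (hc : 0 < c) (hc1 : c ≤ 1)
    (hα : 1 ≤ α) {k : ℕ} (hk : 1 ≤ k) :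
    ((dyadicShell E k).ncard : ℝ) ≤ (2 ^ α / c + 2) * ((2 : ℝ)⁻¹ ^ k) ^ (-(α - 1)) := by
  set ρ : ℝ := (2 : ℝ)⁻¹ ^ k
  have hρ : 0 < ρ := by positivity
  have hρ2 : ρ ≤ 2⁻¹ := pow_le_of_le_one (by norm_num) (by norm_num) (by omega)
  set r : ℝ := c * (ρ * 2⁻¹) ^ α / 2
  have hr : 0 < r := by positivity
  have hrρ : 2 * r ≤ ρ * 2⁻¹ := by
    have : (ρ * 2⁻¹) ^ α ≤ ρ * 2⁻¹ := by
      simpa using Real.rpow_le_rpow_of_exponent_ge (by positivity) (by linarith) hα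
    have : 2 * r = c * (ρ * 2⁻¹) ^ α := by ring
    nlinarith [Real.rpow_nonneg (by positivity : 0 ≤ ρ * 2⁻¹) α]
  have hfin := dyadicShell_finite hsep hE hc (by linarith) k
  have hpair : (dyadicShell E k).Pairwise fun x y => 2 * r < dist x y :=
    dyadicShell_pairwise_lt_dist hsep hc.le (by linarith) (le_of_eq (by rw [pow_succ]; ring))
  have hann := card_mul_pow_add_pow_le_of_subset_annulus hr (a := 1 - ρ) (b := 1 - ρ * 2⁻¹)
    (by linarith) (by linarith) (S := hfin.toFinset)
    (fun x hx => by
      obtain ⟨h1, h2⟩ : ρ * 2⁻¹ < 1 - ‖x‖ ∧ 1 - ‖x‖ ≤ ρ := by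
        simpa [ρ, pow_succ] using (hfin.mem_toFinset.1 hx).2
      constructor <;> linarith)
    (by simpa using hpair)
  rw [finrank_euclideanSpace_fin, pow_one, pow_one, pow_one, ← Set.ncard_eq_toFinset_card _ hfin]
    at hann
  have hscale : ρ / (2 * r) = 2 ^ α / c * ρ ^ (-(α - 1)) := by
    rw [show 2 * r = c * (ρ * 2⁻¹) ^ α by ring, Real.mul_rpow hρ.le (by norm_num),
      Real.inv_rpow (by norm_num), neg_sub, Real.rpow_sub hρ, Real.rpow_one]
    field_simp
  have hone : 1 ≤ ρ ^ (-(α - 1)) :=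
    Real.one_le_rpow_of_pos_of_le_one_of_nonpos hρ (by linarith) (by linarith)
  calc ((dyadicShell E k).ncard : ℝ) ≤ ρ / (2 * r) + 2 := by
        rw [← sub_le_iff_le_add, le_div_iff₀ (by positivity)]; nlinarith
    _ ≤ (2 ^ α / c + 2) * ρ ^ (-(α - 1)) := by rw [hscale]; nlinarith

lemma critExp_le_of_dim_one (hE : E ⊆ ball 0 1) (hc : 0 < c) (hc1 : c ≤ 1) (hα : 1 ≤ α) :
    critExp E ≤ ENNReal.ofReal (α - 1) := by
  refine critExp_le_of_eventually_ncard_le (C := 2 ^ α / c + 2) (σ := (α - 1).toNNReal) hE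
    (dyadicShell_finite hsep hE hc (by linarith)) ((eventually_ge_atTop 1).mono fun k hk => ?_)
  rw [Real.coe_toNNReal _ (by linarith)]
  exact ncard_dyadicShell_le_of_dim_one hsep hE hc hc1 hα hk

end DimensionOne

section WellApproximated

variable {n : ℕ} {E : Set (Pt n)} {c α c₂ β : ℝ}
  (hsep : ∀ x ∈ E, ∀ y ∈ E, y ≠ x → c * (1 - ‖x‖) ^ α < dist y x)
  (hwa : ∀ x ∈ E, ∃ z ∈ limitSet E, dist x z ≤ c₂ * (1 - ‖x‖) ^ β)
include hsep hwa

lemma ncard_dyadicShell_mul_le_toNat_packingNumber (hE : E ⊆ ball 0 1) (hc : 0 < c)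
    (hc1 : c ≤ 1) (hc₂ : 1 ≤ c₂) (hβ : 0 ≤ β) (hβα : β ≤ α) (k : ℕ) :
    (dyadicShell E k).ncard *
        (c * ((2 : ℝ)⁻¹ ^ (k + 1)) ^ α / 2 / (4 * (c₂ * ((2 : ℝ)⁻¹ ^ k) ^ β))) ^ n ≤
      (packingNumber (limitSet E) (c₂ * ((2 : ℝ)⁻¹ ^ k) ^ β)).toNat := by
  have hα : 0 ≤ α := hβ.trans hβα
  have hfin := dyadicShell_finite hsep hE hc hα k
  have hbdd : Bornology.IsBounded (limitSet E) :=
    (isBounded_ball.subset hE).closure.subset sdiff_subset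
  have hρ : (2 : ℝ)⁻¹ ^ (k + 1) ≤ (2 : ℝ)⁻¹ ^ k := pow_le_pow_of_le_one (by norm_num) (by norm_num)
    (Nat.le_succ k)
  have hρα : ((2 : ℝ)⁻¹ ^ (k + 1)) ^ α ≤ ((2 : ℝ)⁻¹ ^ k) ^ β :=
    (Real.rpow_le_rpow (by positivity) hρ hα).trans
      (Real.rpow_le_rpow_of_exponent_ge (by positivity) (pow_le_one₀ (by norm_num) (by norm_num))
        hβα)
  have hpair := dyadicShell_pairwise_lt_dist hsep hc.le hα (k := k)
    (r := c * ((2 : ℝ)⁻¹ ^ (k + 1)) ^ α / 2) (le_of_eq (by ring))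
  rw [Set.ncard_eq_toFinset_card _ hfin]
  refine card_mul_pow_le_toNat_packingNumber hbdd (by positivity) ?_ (by simpa using hpair)
    fun x hx => ?_
  · have : 0 ≤ ((2 : ℝ)⁻¹ ^ (k + 1)) ^ α := by positivity
    nlinarith
  · have hx := hfin.mem_toFinset.1 hx
    obtain ⟨z, hz, hdist⟩ := hwa x hx.1
    refine ⟨z, hz, hdist.trans ?_⟩
    gcongr
    · linarith [hx.2.1, pow_pos (by norm_num : (0 : ℝ) < 2⁻¹) (k + 1)]
    · exact hx.2.2

lemma ofReal_le_upperBoxDim_limitSet (hE : E ⊆ ball 0 1) (hc : 0 < c) (hc1 : c ≤ 1)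
    (hc₂ : 1 ≤ c₂) (hβ : 0 < β) (hβα : β ≤ α) {σ : ℝ}
    (hfreq : ∃ᶠ k in atTop, ((2 : ℝ)⁻¹ ^ k) ^ (-σ) < (dyadicShell E k).ncard) :
    ENNReal.ofReal ((σ - n * (α - β)) / β) ≤ upperBoxDim (limitSet E) := by
  set t := (σ - n * (α - β)) / β
  set A := c * (2 : ℝ)⁻¹ ^ α / (8 * c₂)
  have hc₂0 : 0 < c₂ := by linarith
  have hδ : Tendsto (fun k : ℕ => c₂ * ((2 : ℝ)⁻¹ ^ k) ^ β) atTop (𝓝[>] 0) := by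
    refine tendsto_nhdsWithin_iff.2 ⟨?_, .of_forall fun k => by simp only [mem_Ioi]; positivity⟩
    simp_rw [← Real.rpow_pow_comm (by norm_num : (0 : ℝ) ≤ 2⁻¹)]
    simpa using (tendsto_pow_atTop_nhds_zero_of_lt_one (by positivity)
      (Real.rpow_lt_one (by norm_num) (by norm_num) hβ)).const_mul c₂
  refine ofReal_le_upperBoxDim_of_frequently (C := A ^ n * c₂ ^ t) (by positivity)
    (hδ.frequently (hfreq.mono fun k hk => ?_))
  set ρ : ℝ := (2 : ℝ)⁻¹ ^ k
  have hρ : 0 < ρ := by positivity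
  have hratio : c * ((2 : ℝ)⁻¹ ^ (k + 1)) ^ α / 2 / (4 * (c₂ * ρ ^ β)) = A * ρ ^ (α - β) := by
    rw [pow_succ, Real.mul_rpow hρ.le (by norm_num), Real.rpow_sub hρ]
    simp only [A]
    field_simp
    ring
  have hexp : β * -t = -σ + (α - β) * n := by
    simp only [t]
    field_simp
    ring
  calc A ^ n * c₂ ^ t * (c₂ * ρ ^ β) ^ (-t) = ρ ^ (-σ) * (A * ρ ^ (α - β)) ^ n := by
        rw [Real.mul_rpow hc₂0.le (by positivity), ← Real.rpow_mul hρ.le, hexp, mul_pow,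
          ← Real.rpow_natCast (ρ ^ (α - β)), ← Real.rpow_mul hρ.le, Real.rpow_add hρ,
          Real.rpow_neg hc₂0.le]
        field_simp
    _ ≤ (dyadicShell E k).ncard * (A * ρ ^ (α - β)) ^ n := by gcongr
    _ ≤ (packingNumber (limitSet E) (c₂ * ρ ^ β)).toNat := by
        rw [← hratio]
        exact ncard_dyadicShell_mul_le_toNat_packingNumber hsep hwa hE hc hc1 hc₂ hβ.le hβα k

end WellApproximated

theorem critExp_sub_le_upperBoxDim_general {n : ℕ} (hn : 1 ≤ n) (α β : ℝ)
    (hβ : 0 < β) (hβ1 : β ≤ 1) (hα : 1 ≤ α)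
    (E : Set (Pt n)) (hE : E ⊆ ball 0 1)
    (hsep : AlphaSeparated E α) (hwa : BetaWellApproximated E β) :
    critExp E - ENNReal.ofReal (2 * (n * α - (n - 1) * β - 1)) ≤
      upperBoxDim (limitSet E) := by
  obtain ⟨c, hc, hc1, hsep⟩ := hsep.exists_lt_dist hE
  obtain ⟨c₂, hc₂, hwa⟩ := hwa
  rw [tsub_le_iff_right]
  obtain rfl | hn2 := hn.eq_or_lt
  · calc critExp E ≤ ENNReal.ofReal (α - 1) := critExp_le_of_dim_one hsep hE hc hc1 hα
      _ ≤ ENNReal.ofReal (2 * ((1 : ℕ) * α - ((1 : ℕ) - 1) * β - 1)) :=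
          ENNReal.ofReal_le_ofReal (by push_cast; linarith)
      _ ≤ _ := le_add_self
  refine ENNReal.le_of_forall_nnreal_lt fun σ hσ => ?_
  set K := 2 * (n * α - (n - 1) * β - 1)
  rw [← ENNReal.ofReal_coe_nnreal]
  by_cases hσK : (σ : ℝ) ≤ K
  · exact (ENNReal.ofReal_le_ofReal hσK).trans le_add_self
  have hbox := ofReal_le_upperBoxDim_limitSet hsep hwa hE hc hc1 hc₂ hβ (by linarith)
    (frequently_lt_ncard_of_lt_critExp hE (dyadicShell_finite hsep hE hc (by linarith)) hσ)
  have hn2 : (2 : ℝ) ≤ n := by exact_mod_cast hn2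
  have hσ : (σ : ℝ) ≤ (σ - n * (α - β)) / β + K := by
    rw [div_add' _ _ _ hβ.ne', le_div_iff₀ hβ]
    nlinarith [mul_nonneg (sub_nonneg.2 (not_le.1 hσK).le) (sub_nonneg.2 hβ1),
      mul_nonneg (sub_nonneg.2 hn2) (sub_nonneg.2 (hβ1.trans hα))]
  exact (ENNReal.ofReal_le_ofReal hσ).trans (ENNReal.ofReal_add_le.trans (add_le_add_left hbox _))

/-- **Theorem: if `E` is `α`-separated and `β`-well-approximated, then
`upper box dim L(E) ≥ δ(E) − 2(nα − (n−1)β − 1)`.** -/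
theorem critExp_sub_le_upperBoxDim {n : ℕ} (hn : 1 ≤ n) (α β : ℝ)
    (hβ : 0 < β) (hβ1 : β ≤ 1) (hα : 1 ≤ α)
    (E : Set (Pt n)) (hE : E ⊆ ball 0 1) (hdisc : IsDiscreteSet E)
    (hsep : AlphaSeparated E α) (hwa : BetaWellApproximated E β) :
    critExp E - ENNReal.ofReal (2 * (n * α - (n - 1) * β - 1)) ≤
      upperBoxDim (limitSet E) :=
  critExp_sub_le_upperBoxDim_general hn α β hβ hβ1 hα E hE hsep hwa
end
end

section
/- Let n ≥ 1, let γ ∈ (0,1], and let E ⊆ 𝔻ⁿ be any discrete set. Then the Hausdorff dimension of the γ-radial limit set L_rad^γ(E) is at most δ(E)/γ. -/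
open Metric Set Filter
open scoped ENNReal NNReal

noncomputable section

/-!
Every point of `L_c^γ(E)` lies in infinitely many of the balls `B(x, c (1 - |x|)^γ)`, `x ∈ E`,
and `∑ₓ diam B(x, c (1 - |x|)^γ) ^ (u/γ) ≲ S_E(u)`. When `S_E(u) < ∞` the Hausdorff–Cantelli
lemma therefore makes `L_c^γ(E)` an `H^{u/γ}`-null set. As `L_rad^γ(E)` is the increasing union
of the countably many `L_k^γ(E)`, `k ∈ ℕ`, its dimension is at most `u/γ`; then take the
infimum over `u`.
-/

open MeasureTheory
open scoped Topology

theorem Metric.ediam_closedBall_le_ofReal {X : Type*} [PseudoMetricSpace X] (x : X) (ρ : ℝ) :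
    ediam (closedBall x ρ) ≤ ENNReal.ofReal (2 * ρ) :=
  ediam_le_of_forall_dist_le fun y hy z hz => by
    linarith [dist_triangle_right y z x, mem_closedBall.1 hy, mem_closedBall.1 hz]

theorem ENNReal.tendsto_iSup_compl_atTop_zero {ι : Type*} {f : ι → ℝ≥0∞} {d : ℝ} (hd : 0 ≤ d)
    (hf : ∑' i, f i ^ d ≠ ∞) :
    Tendsto (fun F : Finset ι => ⨆ i : {i // i ∉ F}, f i) atTop (𝓝 0) := by
  refine ENNReal.tendsto_nhds_zero.2 fun ε hε => ?_
  have hfin : {i | ε < f i}.Finite :=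
    (ENNReal.finite_const_le_of_tsum_ne_top hf (ENNReal.rpow_pos_of_nonneg hε hd).ne').subset
      fun i hi => ENNReal.rpow_le_rpow (le_of_lt hi) hd
  filter_upwards [eventually_ge_atTop hfin.toFinset] with F hF
  exact iSup_le fun i => not_lt.1 fun h => i.2 (hF (hfin.mem_toFinset.2 h))

/-- The Hausdorff–Cantelli lemma. -/
theorem hausdorffMeasure_limsup_cofinite_eq_zero {X ι : Type*} [EMetricSpace X]
    [MeasurableSpace X] [BorelSpace X] [Countable ι] {d : ℝ} (hd : 0 ≤ d) {t : ι → Set X}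
    (ht : ∑' i, ediam (t i) ^ d ≠ ∞) : μH[d] (limsup t cofinite) = 0 := by
  have hcover (F : Finset ι) : limsup t cofinite ⊆ ⋃ i : {i // i ∉ F}, t i := fun x hx => by
    obtain ⟨i, hxi, hiF⟩ := (frequently_cofinite_iff_infinite.1
      (mem_limsup_iff_frequently_mem.1 hx)).exists_notMem_finset F
    exact mem_iUnion.2 ⟨⟨i, hiF⟩, hxi⟩
  have hle := Measure.hausdorffMeasure_le_liminf_tsum (ι := fun F : Finset ι => {i // i ∉ F}) d
    (limsup t cofinite) (l := atTop) (fun F => ⨆ i : {i // i ∉ F}, ediam (t i))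
    (ENNReal.tendsto_iSup_compl_atTop_zero hd ht) (fun _ i => t i)
    (Eventually.of_forall fun F => le_iSup (fun i : {i // i ∉ F} => ediam (t i)))
    (Eventually.of_forall hcover)
  rwa [(ENNReal.tendsto_tsum_compl_atTop_zero ht).liminf_eq, nonpos_iff_eq_zero] at hle

section GammaRadial

variable {n : ℕ} {E : Set (Pt n)} {γ c : ℝ}

theorem countable_of_accSeries_ne_top (hE : E ⊆ ball 0 1) {s : ℝ} (hS : accSeries E s ≠ ⊤) :
    E.Countable := by
  have hsupp := Summable.countable_support_ennreal hS
  rw [Function.support_eq_univ fun x => (ENNReal.ofReal_pos.2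
      (Real.rpow_pos_of_pos (sub_pos.2 (mem_ball_zero_iff.1 (hE x.2))) _)).ne'] at hsupp
  exact Set.countable_coe_iff.1 (Set.countable_univ_iff.1 hsupp)

theorem gammaRadialPoints_mono (hE : E ⊆ ball 0 1) {c' : ℝ} (hc : 0 < c) (hcc' : c ≤ c') :
    gammaRadialPoints E γ c ⊆ gammaRadialPoints E γ c' := by
  rintro z ⟨hzL, hz⟩
  refine ⟨hzL, fun r hr => ?_⟩
  obtain ⟨x, hx, hdist, hle⟩ := hz r hr
  have ha : 0 ≤ (1 - ‖x‖) ^ γ :=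
    Real.rpow_nonneg (sub_nonneg.2 (mem_ball_zero_iff.1 (hE hx)).le) γ
  exact ⟨x, hx, hdist.trans (mul_le_mul_of_nonneg_right hcc' ha),
    mul_le_mul_of_nonneg_left ((mul_le_mul_iff_right₀ hc).1 hle) (hc.le.trans hcc')⟩

theorem gammaRadialLimitSet_subset_iUnion_nat (hE : E ⊆ ball 0 1) :
    gammaRadialLimitSet E γ ⊆ ⋃ k : ℕ, gammaRadialPoints E γ (k + 1) := by
  simp only [gammaRadialLimitSet, iUnion_subset_iff, mem_Ici]
  intro c hc
  exact (gammaRadialPoints_mono hE (by linarith) ((Nat.le_ceil c).trans (by linarith))).trans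
    (subset_iUnion (fun k : ℕ => gammaRadialPoints E γ (k + 1)) ⌈c⌉₊)

/-- If only finitely many balls contained `z`, the witness for an `r` below all their
`1 - ‖x‖` would be the centre of yet another one. -/
theorem gammaRadialPoints_subset_limsup (hE : E ⊆ ball 0 1) (hγ : 0 < γ) (hc : 0 < c) :
    gammaRadialPoints E γ c ⊆
      limsup (fun x : E => closedBall (x : Pt n) (c * (1 - ‖(x : Pt n)‖) ^ γ)) cofinite := by
  rintro z ⟨-, hz⟩
  refine mem_limsup_iff_frequently_mem.2 (frequently_cofinite_iff_infinite.2 fun hF => ?_)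
  have ha : ∀ x : E, 0 < 1 - ‖(x : Pt n)‖ := fun x => sub_pos.2 (mem_ball_zero_iff.1 (hE x.2))
  have hsmall : ∀ᶠ r in 𝓝[>] (0 : ℝ),
      ∀ x ∈ {x : E | z ∈ closedBall (x : Pt n) (c * (1 - ‖(x : Pt n)‖) ^ γ)},
        r < 1 - ‖(x : Pt n)‖ :=
    hF.eventually_all.2 fun x _ => nhdsWithin_le_nhds (eventually_lt_nhds (ha x))
  obtain ⟨r, hrF, hr : 0 < r⟩ := (hsmall.and self_mem_nhdsWithin).exists
  obtain ⟨x, hx, hdist, hle⟩ := hz r hr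
  have hxr : 1 - ‖x‖ ≤ r := (Real.rpow_le_rpow_iff (ha ⟨x, hx⟩).le hr.le hγ).1
    ((mul_le_mul_iff_right₀ hc).1 hle)
  have hzx : z ∈ closedBall x (c * (1 - ‖x‖) ^ γ) := by
    rw [mem_closedBall, dist_comm]; exact hdist
  exact (hrF ⟨x, hx⟩ hzx).not_ge hxr

theorem tsum_ediam_closedBall_rpow_le (hE : E ⊆ ball 0 1) (hγ : 0 < γ) (hc : 0 ≤ c) {u : ℝ}
    (hu : 0 ≤ u) :
    ∑' x : E, ediam (closedBall (x : Pt n) (c * (1 - ‖(x : Pt n)‖) ^ γ)) ^ (u / γ) ≤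
      ENNReal.ofReal ((2 * c) ^ (u / γ)) * accSeries E u := by
  rw [accSeries, ← ENNReal.tsum_mul_left]
  refine ENNReal.tsum_le_tsum fun x => ?_
  have ha : 0 ≤ 1 - ‖(x : Pt n)‖ := sub_nonneg.2 (mem_ball_zero_iff.1 (hE x.2)).le
  calc ediam (closedBall (x : Pt n) (c * (1 - ‖(x : Pt n)‖) ^ γ)) ^ (u / γ)
      ≤ ENNReal.ofReal (2 * (c * (1 - ‖(x : Pt n)‖) ^ γ)) ^ (u / γ) :=
        ENNReal.rpow_le_rpow (Metric.ediam_closedBall_le_ofReal _ _) (by positivity)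
    _ = ENNReal.ofReal ((2 * c) ^ (u / γ) * (1 - ‖(x : Pt n)‖) ^ u) := by
        rw [ENNReal.ofReal_rpow_of_nonneg (by positivity) (by positivity), ← mul_assoc,
          Real.mul_rpow (by positivity) (by positivity), ← Real.rpow_mul ha,
          mul_div_cancel₀ _ hγ.ne']
    _ = _ := ENNReal.ofReal_mul (by positivity)

theorem hausdorffMeasure_gammaRadialPoints_eq_zero (hE : E ⊆ ball 0 1) (hγ : 0 < γ)
    (hc : 0 < c) {u : ℝ} (hu : 0 ≤ u) (hS : accSeries E u ≠ ⊤) :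
    μH[u / γ] (gammaRadialPoints E γ c) = 0 := by
  have := (countable_of_accSeries_ne_top hE hS).to_subtype
  refine measure_mono_null (gammaRadialPoints_subset_limsup hE hγ hc)
    (hausdorffMeasure_limsup_cofinite_eq_zero (by positivity) ?_)
  exact ne_top_of_le_ne_top (ENNReal.mul_ne_top ENNReal.ofReal_ne_top hS)
    (tsum_ediam_closedBall_rpow_le hE hγ hc.le hu)

theorem dimH_gammaRadialPoints_le (hE : E ⊆ ball 0 1) (hγ : 0 < γ) (hc : 0 < c) {u : ℝ≥0}
    (hS : accSeries E u < ⊤) : dimH (gammaRadialPoints E γ c) ≤ u / ENNReal.ofReal γ := by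
  rw [ENNReal.ofReal, ← ENNReal.coe_div (Real.toNNReal_pos.2 hγ).ne']
  refine dimH_le_of_hausdorffMeasure_ne_top ?_
  rw [NNReal.coe_div, Real.coe_toNNReal _ hγ.le]
  exact (hausdorffMeasure_gammaRadialPoints_eq_zero hE hγ hc u.2 hS.ne).trans_ne
    ENNReal.zero_ne_top

end GammaRadial

theorem dimH_gammaRadialLimitSet_le_general {n : ℕ} (γ : ℝ) (hγ : 0 < γ)
    (E : Set (Pt n)) (hE : E ⊆ ball 0 1) :
    dimH (gammaRadialLimitSet E γ) ≤ critExp E / ENNReal.ofReal γ := by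
  have hγ₀ : ENNReal.ofReal γ ≠ 0 := (ENNReal.ofReal_pos.2 hγ).ne'
  simp only [critExp, ENNReal.iInf_div_of_ne hγ₀ ENNReal.ofReal_ne_top]
  refine le_iInf₂ fun u hu => ?_
  calc dimH (gammaRadialLimitSet E γ)
      ≤ dimH (⋃ k : ℕ, gammaRadialPoints E γ (k + 1)) :=
        dimH_mono (gammaRadialLimitSet_subset_iUnion_nat hE)
    _ = ⨆ k : ℕ, dimH (gammaRadialPoints E γ (k + 1)) := dimH_iUnion _
    _ ≤ u / ENNReal.ofReal γ :=
        iSup_le fun k => dimH_gammaRadialPoints_le hE hγ k.cast_add_one_pos hu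

/-- **Theorem: `dim_H L_rad^γ(E) ≤ δ(E) / γ` for any discrete `E ⊆ 𝔻ⁿ` and `γ ∈ (0,1]`.** -/
theorem dimH_gammaRadialLimitSet_le {n : ℕ} (hn : 1 ≤ n) (γ : ℝ)
    (hγ : 0 < γ) (hγ1 : γ ≤ 1)
    (E : Set (Pt n)) (hE : E ⊆ ball 0 1) (hdisc : IsDiscreteSet E) :
    dimH (gammaRadialLimitSet E γ) ≤ critExp E / ENNReal.ofReal γ :=
  dimH_gammaRadialLimitSet_le_general γ hγ E hE

end
end

section
/- Let n ≥ 1 and let E ⊆ 𝔻ⁿ be a discrete set that is separated. Then the critical exponent satisfies δ(E) ≤ n − 1; equivalently, the accumulation series S_E(s) = Σ_{x ∈ E} (1 − |x|)^s converges for every s > n − 1. -/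
open Metric Set Filter
open scoped ENNReal NNReal

noncomputable section

/-!
Around each `x ∈ E` the ball `B_x` of radius `c (1 - ‖x‖) / 2` lies in the unit ball, has volume
`≍ (1 - ‖x‖)ⁿ`, and on it `1 - ‖z‖ ≍ 1 - ‖x‖`; separation makes these balls pairwise disjoint.
Hence, for `n - 1 < s ≤ n`,
`∑_{x ∈ E} (1 - ‖x‖)^s ≲ ∑_x ∫_{B_x} (1 - ‖z‖)^(s - n) dz ≤ ∫_{‖z‖ < 1} (1 - ‖z‖)^(s - n) dz`,
which in polar coordinates is `≍ ∫₀¹ rⁿ⁻¹ (1 - r)^(s - n) dr < ∞` since `s - n > -1`.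
Larger `s` only make the terms smaller.
-/

open MeasureTheory

theorem pairwiseDisjoint_ball_of_le_dist {F : Type*} [SeminormedAddCommGroup F] {E : Set F} {c : ℝ}
    (hsep : ∀ x ∈ E, ∀ y ∈ E, x ≠ y → c * (1 - ‖x‖) ≤ dist x y) :
    E.PairwiseDisjoint fun x => ball x (c * (1 - ‖x‖) / 2) := by
  intro x hx y hy hxy
  have hxy' := hsep x hx y hy hxy
  have hyx := dist_comm y x ▸ hsep y hy x hx hxy.symm
  exact ball_disjoint_ball (by linarith)

section

variable {F : Type*} [NormedAddCommGroup F] [NormedSpace ℝ F] [FiniteDimensional ℝ F]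
  [MeasurableSpace F] [BorelSpace F] (μ : Measure F) [μ.IsAddHaarMeasure]

theorem integrableOn_one_sub_rpow_Ioo {s : ℝ} (hs : -1 < s) :
    IntegrableOn (fun y : ℝ => (1 - y) ^ s) (Ioo 0 1) := by
  have h := (intervalIntegral.intervalIntegrable_rpow' (a := 0) (b := 1) hs).comp_sub_left 1
  rw [sub_zero, sub_self] at h
  exact (intervalIntegrable_iff_integrableOn_Ioo_of_le zero_le_one).1 h.symm

theorem integrableOn_ball_one_sub_norm_rpow {s : ℝ} (hs : -1 < s) :
    IntegrableOn (fun z : F => (1 - ‖z‖) ^ s) (ball 0 1) μ := by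
  rcases subsingleton_or_nontrivial F with hF | hF
  · have : (fun z : F => (1 - ‖z‖) ^ s) = fun _ => 1 := by
      ext z; simp [Subsingleton.elim z 0]
    rw [this]
    exact integrableOn_const measure_ball_lt_top.ne
  refine (integrableOn_fun_norm_addHaar μ (f := fun y => (1 - y) ^ s)).2 ?_
  refine (integrableOn_one_sub_rpow_Ioo hs).mono' ?_ ?_
  · have hpow : Continuous fun y : ℝ => y ^ (Module.finrank ℝ F - 1) := by fun_prop
    exact hpow.aestronglyMeasurable.smul (integrableOn_one_sub_rpow_Ioo hs).aestronglyMeasurable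
  · filter_upwards [ae_restrict_mem measurableSet_Ioo] with y ⟨hy0, hy1⟩
    rw [norm_smul, Real.norm_of_nonneg (Real.rpow_nonneg (by linarith) _),
      Real.norm_of_nonneg (pow_nonneg hy0.le _)]
    exact mul_le_of_le_one_left (Real.rpow_nonneg (by linarith) _)
      (pow_le_one₀ hy0.le hy1.le)

theorem setLIntegral_ball_one_sub_norm_rpow_lt_top {s : ℝ} (hs : -1 < s) :
    ∫⁻ z in ball (0 : F) 1, ENNReal.ofReal ((1 - ‖z‖) ^ s) ∂μ < ⊤ :=
  (integrableOn_ball_one_sub_norm_rpow μ hs).lintegral_lt_top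

theorem ofReal_mul_le_setLIntegral_ball {x : F} (hx : ‖x‖ < 1) {ρ s : ℝ} (hρ0 : 0 < ρ)
    (hρ1 : ρ ≤ 1) (hs : s ≤ Module.finrank ℝ F) :
    ENNReal.ofReal (2 ^ (s - Module.finrank ℝ F) * (ρ / 2) ^ Module.finrank ℝ F) * μ (ball 0 1) *
        ENNReal.ofReal ((1 - ‖x‖) ^ s) ≤
      ∫⁻ z in ball x (ρ * (1 - ‖x‖) / 2),
        ENNReal.ofReal ((1 - ‖z‖) ^ (s - Module.finrank ℝ F)) ∂μ := by
  set d := Module.finrank ℝ F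
  set δ := 1 - ‖x‖
  have hδ0 : 0 < δ := by linarith
  have hr0 : 0 < ρ * δ / 2 := by positivity
  have hle : ∀ z ∈ ball x (ρ * δ / 2),
      ENNReal.ofReal ((2 * δ) ^ (s - d)) ≤ ENNReal.ofReal ((1 - ‖z‖) ^ (s - d)) := by
    intro z hz
    have hzx := abs_lt.1 ((abs_norm_sub_norm_le z x).trans_lt (mem_ball_iff_norm.1 hz))
    have hρδ : ρ * δ ≤ δ := mul_le_of_le_one_left hδ0.le hρ1
    exact ENNReal.ofReal_le_ofReal
      (Real.rpow_le_rpow_of_nonpos (by linarith) (by linarith) (by linarith))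
  have hpow : (2 * δ) ^ (s - d) * (ρ * δ / 2) ^ d = 2 ^ (s - d) * (ρ / 2) ^ d * δ ^ s := by
    have hsplit : δ ^ s = δ ^ (s - d) * δ ^ d := by
      rw [← Real.rpow_natCast, ← Real.rpow_add hδ0, sub_add_cancel]
    rw [Real.mul_rpow zero_le_two hδ0.le, hsplit]
    ring_nf
  calc _ = ENNReal.ofReal ((2 * δ) ^ (s - d)) * μ (ball x (ρ * δ / 2)) := by
        rw [μ.addHaar_ball_of_pos x hr0, ← mul_assoc, ← ENNReal.ofReal_mul (by positivity), hpow,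
          mul_right_comm, ← ENNReal.ofReal_mul (by positivity)]
    _ ≤ _ := by
        rw [← setLIntegral_const]
        exact setLIntegral_mono (by fun_prop) hle

theorem mul_tsum_le_setLIntegral_ball {E : Set F} (hE : E ⊆ ball 0 1) {c : ℝ} (hc0 : 0 < c)
    (hc1 : c ≤ 1) (hsep : ∀ x ∈ E, ∀ y ∈ E, x ≠ y → c * (1 - ‖x‖) ≤ dist x y) {s : ℝ}
    (hs : s ≤ Module.finrank ℝ F) :
    ENNReal.ofReal (2 ^ (s - Module.finrank ℝ F) * (c / 2) ^ Module.finrank ℝ F) * μ (ball 0 1) *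
        ∑' x : E, ENNReal.ofReal ((1 - ‖(x : F)‖) ^ s) ≤
      ∫⁻ z in ball 0 1, ENNReal.ofReal ((1 - ‖z‖) ^ (s - Module.finrank ℝ F)) ∂μ := by
  set ν := μ.withDensity fun z => ENNReal.ofReal ((1 - ‖z‖) ^ (s - Module.finrank ℝ F))
  have hball : ∀ x : E, ball (x : F) (c * (1 - ‖(x : F)‖) / 2) ⊆ ball 0 1 := fun x =>
    ball_subset_ball' <| by
      have := mem_ball_zero_iff.1 (hE x.2)
      rw [dist_zero_right]
      nlinarith
  rw [← ENNReal.tsum_mul_left, ← withDensity_apply _ measurableSet_ball]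
  calc _ ≤ ∑' x : E, ν (ball (x : F) (c * (1 - ‖(x : F)‖) / 2)) :=
        ENNReal.tsum_le_tsum fun x => by
          rw [withDensity_apply _ measurableSet_ball]
          exact ofReal_mul_le_setLIntegral_ball μ (mem_ball_zero_iff.1 (hE x.2)) hc0 hc1 hs
    _ ≤ ν (⋃ x : E, ball (x : F) (c * (1 - ‖(x : F)‖) / 2)) :=
        tsum_meas_le_meas_iUnion_of_disjoint ν (fun _ => measurableSet_ball)
          ((pairwiseDisjoint_ball_of_le_dist hsep).subtype _ _)
    _ ≤ ν (ball 0 1) := measure_mono (iUnion_subset hball)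

end

theorem tsum_one_sub_norm_rpow_lt_top {F : Type*} [NormedAddCommGroup F] [NormedSpace ℝ F]
    [FiniteDimensional ℝ F] {E : Set F} (hE : E ⊆ ball 0 1) {c : ℝ} (hc0 : 0 < c) (hc1 : c ≤ 1)
    (hsep : ∀ x ∈ E, ∀ y ∈ E, x ≠ y → c * (1 - ‖x‖) ≤ dist x y) {s : ℝ}
    (hs : (Module.finrank ℝ F : ℝ) - 1 < s) :
    ∑' x : E, ENNReal.ofReal ((1 - ‖(x : F)‖) ^ s) < ⊤ := by
  borelize F
  set d := Module.finrank ℝ F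
  set s₀ := min s d
  have hs₀ : (d : ℝ) - 1 < s₀ := lt_min hs (by linarith)
  have hsum : ∑' x : E, ENNReal.ofReal ((1 - ‖(x : F)‖) ^ s₀) < ⊤ := by
    let μ : Measure F := Measure.addHaar
    have hconst : ENNReal.ofReal (2 ^ (s₀ - d) * (c / 2) ^ d) * μ (ball 0 1) ≠ 0 :=
      mul_ne_zero (ENNReal.ofReal_pos.2 (by positivity)).ne' (measure_ball_pos μ 0 one_pos).ne'
    refine ENNReal.lt_top_of_mul_ne_top_right ?_ hconst
    exact ((mul_tsum_le_setLIntegral_ball μ hE hc0 hc1 hsep (min_le_right _ _)).trans_lt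
      (setLIntegral_ball_one_sub_norm_rpow_lt_top μ (by linarith))).ne
  refine lt_of_le_of_lt (ENNReal.tsum_le_tsum fun x => ENNReal.ofReal_le_ofReal ?_) hsum
  have hx := mem_ball_zero_iff.1 (hE x.2)
  exact Real.rpow_le_rpow_of_exponent_ge (by linarith) (by linarith [norm_nonneg (x : F)])
    (min_le_left _ _)

theorem SeparatedSet.exists_le_dist {n : ℕ} {E : Set (Pt n)} (hsep : SeparatedSet E) :
    ∃ c : ℝ, 0 < c ∧ c ≤ 1 ∧ ∀ x ∈ E, ∀ y ∈ E, x ≠ y → c * (1 - ‖x‖) ≤ dist x y := by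
  obtain ⟨c, hc0, hc1, hc⟩ := hsep
  refine ⟨c, hc0, hc1.le, fun x hx y hy hxy => ?_⟩
  have hyx : y ∉ closedBall x (c * (1 - ‖x‖)) := fun hyx => by
    have hmem : y ∈ closedBall x (c * (1 - ‖x‖)) ∩ E := ⟨hyx, hy⟩
    rw [hc x hx, mem_singleton_iff] at hmem
    exact hxy hmem.symm
  rw [mem_closedBall, not_le, dist_comm] at hyx
  exact hyx.le

theorem critExp_le_of_forall_lt {n : ℕ} {E : Set (Pt n)} {m : ℝ≥0}
    (h : ∀ s : ℝ≥0, m < s → accSeries E s < ⊤) : critExp E ≤ m :=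
  le_of_forall_gt fun c hc => by
    obtain ⟨s, hms, hsc⟩ := ENNReal.lt_iff_exists_nnreal_btwn.1 hc
    exact (iInf₂_le s (h s (by exact_mod_cast hms))).trans_lt hsc

theorem critExp_le_of_separated_general {n : ℕ} (E : Set (Pt n)) (hE : E ⊆ ball 0 1)
    (hsep : SeparatedSet E) :
    critExp E ≤ ((n - 1 : ℕ) : ℝ≥0∞) ∧
      ∀ s : ℝ, (n : ℝ) - 1 < s → accSeries E s < ⊤ := by
  obtain ⟨c, hc0, hc1, hc⟩ := hsep.exists_le_dist
  have hsum : ∀ s : ℝ, (n : ℝ) - 1 < s → accSeries E s < ⊤ := fun s hs =>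
    tsum_one_sub_norm_rpow_lt_top hE hc0 hc1 hc (by rwa [finrank_euclideanSpace_fin])
  have hn : (n : ℝ) - 1 ≤ ((n - 1 : ℕ) : ℝ) := by
    rcases n with _ | n <;> simp
  refine ⟨?_, hsum⟩
  rw [← ENNReal.coe_natCast]
  exact critExp_le_of_forall_lt fun s hs =>
    hsum s (hn.trans_lt (by rwa [← NNReal.coe_natCast, NNReal.coe_lt_coe]))

/-- **If `E ⊆ 𝔻ⁿ` is separated then `δ(E) ≤ n − 1`; equivalently `S_E(s) < ∞` for all
`s > n − 1`.** -/
theorem critExp_le_of_separated {n : ℕ} (hn : 1 ≤ n)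
    (E : Set (Pt n)) (hE : E ⊆ ball 0 1) (hdisc : IsDiscreteSet E)
    (hsep : SeparatedSet E) :
    critExp E ≤ ((n - 1 : ℕ) : ℝ≥0∞) ∧
      ∀ s : ℝ, (n : ℝ) - 1 < s → accSeries E s < ⊤ :=
  critExp_le_of_separated_general E hE hsep
end
end

section
/- Let n ≥ 2. There exists a discrete, separated set E ⊆ 𝔻ⁿ with limit set L(E) = S^{n-1} (so dim_H L(E) = dim_B L(E) = n − 1) and critical exponent δ(E) = 0. (For example, take E = ∪_k E_k where each E_k consists of k maximally separated points all at Euclidean distance 2^{-k} from S^{n-1}.) -/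
/-!
Put one point at depth `2⁻¹ ^ k` below the unit sphere, in directions running through a dense
sequence of the sphere so that every direction recurs at arbitrarily small depths. Two points at
different depths are at least half the larger depth apart, so the set is separated; any smaller
ball contains only finitely many of the points, so the limit set is exactly the sphere; and the
accumulation series is the geometric series `∑ 2^(-k s)`, finite for every `s > 0`.

The dimensions of the sphere `S^m` are computed directly. Stereographic projection and its inverse
are smooth, which gives `dimH S^m = m`. A family of disjoint `δ`-balls centred on `S^m` fills part
of the shell of width `2δ` around it, so by volume it has at most `C δ^(-m)` members; lifting a
`3δ`-grid of the unit ball of `ℝ^m` to the upper hemisphere gives a packing with at least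
`c δ^(-m)` members. Hence both box dimensions equal `m`.
-/

open Metric Set Filter
open scoped ENNReal NNReal

noncomputable section

open Topology MeasureTheory Module

section SphereDimension

variable {E : Type*} [NormedAddCommGroup E] [InnerProductSpace ℝ E] [FiniteDimensional ℝ E]

theorem dimH_sphere_eq_finrank_orthogonal {v : E} (hv : ‖v‖ = 1) :
    dimH (sphere (0 : E) 1) = finrank ℝ (ℝ ∙ v)ᗮ := by
  apply le_antisymm
  · have hcover : sphere (0 : E) 1 ⊆ range (fun w : (ℝ ∙ v)ᗮ ↦ stereoInvFunAux v w) ∪ {v} := by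
      intro x hx
      by_cases hxv : x = v
      · exact Or.inr hxv
      · refine Or.inl ⟨stereoToFun v x, ?_⟩
        simpa [← stereoInvFun_apply hv] using
          congrArg Subtype.val (stereo_left_inv hv (x := ⟨x, hx⟩) hxv)
    have hsmooth : ContDiff ℝ 1 (fun w : (ℝ ∙ v)ᗮ ↦ stereoInvFunAux v w) :=
      contDiff_stereoInvFunAux.comp (ℝ ∙ v)ᗮ.subtypeL.contDiff
    calc dimH (sphere (0 : E) 1)
        ≤ dimH (range (fun w : (ℝ ∙ v)ᗮ ↦ stereoInvFunAux v w) ∪ {v}) := dimH_mono hcover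
      _ = dimH (range fun w : (ℝ ∙ v)ᗮ ↦ stereoInvFunAux v w) := by
        rw [dimH_union, dimH_singleton, max_eq_left zero_le]
      _ ≤ finrank ℝ (ℝ ∙ v)ᗮ := hsmooth.dimH_range_le
  · have hhalf : sphere (0 : E) 1 \ {v} ⊆ {x | inner ℝ v x < 1} := by
      rintro x ⟨hx, hxv⟩
      exact (inner_lt_one_iff_real_of_norm_eq_one hv (by simpa using hx)).2 (Ne.symm hxv)
    have hsmooth : ContDiffOn ℝ 1 (stereoToFun v) {x | inner ℝ v x < 1} :=
      contDiffOn_stereoToFun.mono fun x hx ↦ ne_of_lt hx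
    have hsurj : univ ⊆ stereoToFun v '' (sphere (0 : E) 1 \ {v}) := fun w _ ↦
      ⟨stereoInvFun hv w,
        ⟨(stereoInvFun hv w).2, fun h ↦ stereoInvFun_ne_north_pole hv w (Subtype.ext h)⟩,
        stereo_right_inv hv w⟩
    calc (finrank ℝ (ℝ ∙ v)ᗮ : ℝ≥0∞) = dimH (univ : Set (ℝ ∙ v)ᗮ) :=
          (Real.dimH_univ_eq_finrank _).symm
      _ ≤ dimH (sphere (0 : E) 1 \ {v}) :=
          (dimH_mono hsurj).trans
            (hsmooth.dimH_image_le (convex_halfSpace_lt (innerSL ℝ v).isLinear _) hhalf)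
      _ ≤ dimH (sphere (0 : E) 1) := dimH_mono sdiff_subset

theorem dimH_sphere_eq_finrank_sub_one [Nontrivial E] :
    dimH (sphere (0 : E) 1) = (finrank ℝ E - 1 : ℕ) := by
  obtain ⟨v, hv⟩ := (NormedSpace.sphere_nonempty (x := (0 : E))).2 zero_le_one
  rw [mem_sphere_zero_iff_norm] at hv
  rw [dimH_sphere_eq_finrank_orthogonal hv]
  congr 1
  apply Submodule.finrank_add_finrank_orthogonal'
  rw [finrank_span_singleton (ne_zero_of_norm_ne_zero (hv ▸ one_ne_zero)), add_comm,
    Nat.sub_add_cancel finrank_pos]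

end SphereDimension

section SubsetsOfBall

variable {n : ℕ} {E : Set (Pt n)}

theorem SeparatedSet.isDiscreteSet (hE : E ⊆ ball 0 1) (hsep : SeparatedSet E) :
    IsDiscreteSet E := by
  obtain ⟨c, hc, -, hsep⟩ := hsep
  intro x hx
  have : ‖x‖ < 1 := mem_ball_zero_iff.1 (hE hx)
  exact ⟨c * (1 - ‖x‖), mul_pos hc (by linarith), hsep x hx⟩

theorem limitSet_subset_sphere (hE : E ⊆ ball 0 1) (hfin : ∀ r < 1, (E ∩ ball 0 r).Finite) :
    limitSet E ⊆ sphere 0 1 := by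
  rintro w ⟨hwE, hw⟩
  have hw1 : ‖w‖ ≤ 1 := by
    simpa using closure_minimal (hE.trans ball_subset_closedBall) isClosed_closedBall hwE
  refine mem_sphere_zero_iff_norm.2 (hw1.eq_or_lt.resolve_right fun hlt ↦ hw ?_)
  obtain ⟨r, hwr, hr⟩ := exists_between hlt
  have : w ∈ closure (ball 0 r ∩ E) :=
    isOpen_ball.inter_closure ⟨mem_ball_zero_iff.2 hwr, hwE⟩
  rw [inter_comm, (hfin r hr).isClosed.closure_eq] at this
  exact this.1

theorem sphere_subset_limitSet (hE : E ⊆ ball 0 1) (hS : sphere 0 1 ⊆ closure E) :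
    sphere 0 1 ⊆ limitSet E := fun _ hz ↦
  ⟨hS hz, fun hzE ↦ (mem_ball_zero_iff.1 (hE hzE)).ne (mem_sphere_zero_iff_norm.1 hz)⟩

theorem critExp_eq_zero (h : ∀ s : ℝ, 0 < s → accSeries E s < ⊤) : critExp E = 0 := by
  refine le_antisymm (ENNReal.le_of_forall_pos_le_add fun ε hε _ ↦ ?_) zero_le
  rw [zero_add]
  exact iInf₂_le (ε : ℝ≥0) (h ε hε)

end SubsetsOfBall

section RadialSequence

variable {n : ℕ} (u : ℕ → sphere (0 : Pt n) 1)

-- `k` encodes a pair `(i, j)` as `Nat.pair i j`, so every direction `u j` recurs at arbitrarily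
-- small depths `2⁻¹ ^ k`.
def radialPoint (k : ℕ) : Pt n := (1 - 2⁻¹ ^ k : ℝ) • (u k.unpair.2 : Pt n)

variable {u}

theorem norm_radialPoint (k : ℕ) : ‖radialPoint u k‖ = 1 - 2⁻¹ ^ k := by
  have : (2⁻¹ : ℝ) ^ k ≤ 1 := pow_le_one₀ (by norm_num) (by norm_num)
  rw [radialPoint, norm_smul, norm_eq_of_mem_sphere, mul_one, Real.norm_of_nonneg (by linarith)]

theorem range_radialPoint_subset_ball : range (radialPoint u) ⊆ ball 0 1 := by
  rintro _ ⟨k, rfl⟩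
  rw [mem_ball_zero_iff, norm_radialPoint]
  linarith [pow_pos (by norm_num : (0 : ℝ) < 2⁻¹) k]

theorem inv_two_pow_le_two_mul_abs_sub {k l : ℕ} (h : k ≠ l) :
    (2⁻¹ : ℝ) ^ k ≤ 2 * |2⁻¹ ^ k - 2⁻¹ ^ l| := by
  have hk := pow_pos (by norm_num : (0 : ℝ) < 2⁻¹) k
  rcases h.lt_or_gt with hkl | hlk
  · have : (2⁻¹ : ℝ) ^ l ≤ 2⁻¹ ^ (k + 1) := pow_le_pow_of_le_one (by norm_num) (by norm_num) hkl
    rw [pow_succ] at this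
    rw [abs_of_pos (by linarith)]
    linarith
  · have : (2⁻¹ : ℝ) ^ k ≤ 2⁻¹ ^ (l + 1) := pow_le_pow_of_le_one (by norm_num) (by norm_num) hlk
    rw [pow_succ] at this
    rw [abs_of_neg (by linarith)]
    linarith

theorem inv_two_pow_le_two_mul_dist_radialPoint {k l : ℕ} (h : k ≠ l) :
    (2⁻¹ : ℝ) ^ k ≤ 2 * dist (radialPoint u k) (radialPoint u l) := by
  have := abs_norm_sub_norm_le (radialPoint u k) (radialPoint u l)
  rw [← dist_eq_norm, norm_radialPoint, norm_radialPoint, sub_sub_sub_cancel_left,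
    abs_sub_comm] at this
  linarith [inv_two_pow_le_two_mul_abs_sub h]

theorem radialPoint_injective : Function.Injective (radialPoint u) := by
  intro k l hkl
  by_contra h
  have := inv_two_pow_le_two_mul_dist_radialPoint (u := u) h
  rw [hkl, dist_self] at this
  linarith [pow_pos (by norm_num : (0 : ℝ) < 2⁻¹) k]

theorem separatedSet_range_radialPoint : SeparatedSet (range (radialPoint u)) := by
  refine ⟨1 / 4, by norm_num, by norm_num, ?_⟩
  rintro _ ⟨k, rfl⟩
  refine Subset.antisymm ?_ (singleton_subset_iff.2 ⟨mem_closedBall_self ?_, k, rfl⟩)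
  · rintro _ ⟨hdist, l, rfl⟩
    by_contra hlk
    have := inv_two_pow_le_two_mul_dist_radialPoint (u := u) (l := l)
      (Ne.symm (mt (congrArg _) hlk))
    rw [mem_closedBall, dist_comm, norm_radialPoint, sub_sub_cancel] at hdist
    linarith [pow_pos (by norm_num : (0 : ℝ) < 2⁻¹) k]
  · rw [norm_radialPoint, sub_sub_cancel]
    positivity

theorem finite_range_radialPoint_inter_ball {r : ℝ} (hr : r < 1) :
    (range (radialPoint u) ∩ ball 0 r).Finite := by
  have hsmall : ∀ᶠ k in cofinite, (2⁻¹ : ℝ) ^ k < 1 - r := by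
    rw [Nat.cofinite_eq_atTop]
    exact (tendsto_pow_atTop_nhds_zero_of_lt_one (by norm_num) (by norm_num)).eventually
      (gt_mem_nhds (by linarith))
  refine ((eventually_cofinite.1 hsmall).image (radialPoint u)).subset ?_
  rintro _ ⟨⟨k, rfl⟩, hk⟩
  rw [mem_ball_zero_iff, norm_radialPoint] at hk
  exact ⟨k, not_lt.2 (by linarith), rfl⟩

theorem tendsto_radialPoint_pair (j : ℕ) :
    Tendsto (fun i ↦ radialPoint u (Nat.pair i j)) atTop (𝓝 (u j)) := by
  have hdepth : Tendsto (fun i ↦ (2⁻¹ : ℝ) ^ Nat.pair i j) atTop (𝓝 0) :=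
    (tendsto_pow_atTop_nhds_zero_of_lt_one (by norm_num) (by norm_num)).comp
      (tendsto_atTop_mono (fun i ↦ Nat.left_le_pair i j) tendsto_id)
  have := (tendsto_const_nhds (x := (1 : ℝ))).sub hdepth |>.smul_const (u j : Pt n)
  simpa [radialPoint] using this

theorem sphere_subset_closure_range_radialPoint (hu : DenseRange u) :
    sphere 0 1 ⊆ closure (range (radialPoint u)) := by
  intro z hz
  rw [← closure_closure (s := range (radialPoint u))]
  refine map_mem_closure continuous_subtype_val (hu ⟨z, hz⟩) ?_
  rintro _ ⟨j, rfl⟩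
  exact mem_closure_of_tendsto (tendsto_radialPoint_pair j)
    (Eventually.of_forall fun i ↦ mem_range_self _)

theorem limitSet_range_radialPoint (hu : DenseRange u) :
    limitSet (range (radialPoint u)) = sphere 0 1 :=
  (limitSet_subset_sphere range_radialPoint_subset_ball fun _ ↦
    finite_range_radialPoint_inter_ball).antisymm
    (sphere_subset_limitSet range_radialPoint_subset_ball
      (sphere_subset_closure_range_radialPoint hu))

theorem accSeries_range_radialPoint_lt_top {s : ℝ} (hs : 0 < s) :
    accSeries (range (radialPoint u)) s < ⊤ := by
  have hq : ENNReal.ofReal ((2⁻¹ : ℝ) ^ s) < 1 := by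
    rw [ENNReal.ofReal_lt_one]
    exact Real.rpow_lt_one (by norm_num) (by norm_num) hs
  rw [accSeries, tsum_range (fun x : Pt n ↦ ENNReal.ofReal ((1 - ‖x‖) ^ s))
    radialPoint_injective]
  convert tsum_geometric_lt_top.2 hq using 3 with k
  rw [norm_radialPoint, sub_sub_cancel, ← ENNReal.ofReal_pow (by positivity),
    ← Real.rpow_natCast, ← Real.rpow_natCast, ← Real.rpow_mul (by norm_num),
    ← Real.rpow_mul (by norm_num), mul_comm]

end RadialSequence

theorem packingNumber_le_of_mapsTo {n k : ℕ} {F : Set (Pt n)} {G : Set (Pt k)} {δ : ℝ}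
    (hδ : 0 ≤ δ) {f : Pt n → Pt k} (hFG : MapsTo f F G)
    (hf : ∀ x ∈ F, ∀ y ∈ F, dist x y ≤ dist (f x) (f y)) :
    packingNumber F δ ≤ packingNumber G δ := by
  classical
  refine iSup₂_le fun Z hZF ↦ iSup_le fun hZ ↦ ?_
  have hinj : InjOn f Z := fun x hx y hy hxy ↦
    dist_le_zero.1 ((hf x (hZF hx) y (hZF hy)).trans (by rw [hxy, dist_self]))
  have hdisj : (Z.image f : Set (Pt k)).PairwiseDisjoint fun x ↦ closedBall x δ := by
    rw [Finset.coe_image]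
    rintro _ ⟨x, hx, rfl⟩ _ ⟨y, hy, rfl⟩ hxy
    have := (disjoint_closedBall_closedBall_iff hδ hδ).1 (hZ hx hy (ne_of_apply_ne f hxy))
    exact closedBall_disjoint_closedBall (this.trans_le (hf x (hZF hx) y (hZF hy)))
  refine le_iSup₂_of_le (Z.image f) ?_ (le_iSup_of_le hdisj ?_)
  · rw [Finset.coe_image]
    exact hFG.mono_left hZF |>.image_subset
  · rw [Finset.card_image_of_injOn hinj]

def gridPoint {m M : ℕ} (s : ℝ) (v : Fin m → Fin M) : Pt m :=
  WithLp.toLp 2 fun i ↦ s * (v i : ℝ)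

theorem le_dist_gridPoint {m M : ℕ} {s : ℝ} (hs : 0 ≤ s) {v w : Fin m → Fin M} (h : v ≠ w) :
    s ≤ dist (gridPoint s v) (gridPoint s w) := by
  obtain ⟨i, hi⟩ := Function.ne_iff.1 h
  have hvw : (1 : ℝ) ≤ |(v i : ℝ) - w i| := by
    have : (v i : ℤ) ≠ w i := by exact_mod_cast Fin.val_ne_of_ne hi
    exact_mod_cast Int.one_le_abs (sub_ne_zero.2 this)
  calc s ≤ s * |(v i : ℝ) - w i| := le_mul_of_one_le_right hs hvw
    _ = dist (gridPoint s v i) (gridPoint s w i) := by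
      simp only [gridPoint, Real.dist_eq, ← mul_sub, abs_mul, abs_of_nonneg hs]
    _ ≤ dist (gridPoint s v) (gridPoint s w) := by
      rw [EuclideanSpace.dist_eq]
      exact Real.le_sqrt_of_sq_le (Finset.single_le_sum (fun j _ ↦ sq_nonneg (dist _ _))
        (Finset.mem_univ i))

theorem norm_gridPoint_sq_le {m M : ℕ} {s : ℝ} (hs : 0 ≤ s) (v : Fin m → Fin M) :
    ‖gridPoint s v‖ ^ 2 ≤ m * (s * M) ^ 2 := by
  rw [EuclideanSpace.norm_sq_eq]
  calc ∑ i, ‖gridPoint s v i‖ ^ 2 ≤ ∑ _i : Fin m, (s * M) ^ 2 := by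
        refine Finset.sum_le_sum fun i _ ↦ ?_
        simp only [gridPoint, Real.norm_eq_abs, sq_abs]
        gcongr
        exact (v i).2.le
    _ = m * (s * M) ^ 2 := by simp

theorem pow_le_packingNumber_closedBall {m M : ℕ} {δ : ℝ} (hδ : 0 < δ)
    (hM : m * (3 * δ * M) ^ 2 ≤ 1) :
    ((M ^ m : ℕ) : ℕ∞) ≤ packingNumber (closedBall (0 : Pt m) 1) δ := by
  classical
  have hsep : ∀ v w : Fin m → Fin M, v ≠ w →
      2 * δ < dist (gridPoint (3 * δ) v) (gridPoint (3 * δ) w) :=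
    fun v w h ↦ by linarith [le_dist_gridPoint (by positivity : 0 ≤ 3 * δ) h]
  have hinj : Function.Injective (gridPoint (m := m) (M := M) (3 * δ)) := fun v w h ↦ by
    by_contra hvw
    have := hsep v w hvw
    rw [h, dist_self] at this
    linarith
  set Z := Finset.univ.image (gridPoint (m := m) (M := M) (3 * δ))
  have hdisj : (Z : Set (Pt m)).PairwiseDisjoint fun x ↦ closedBall x δ := by
    rw [Finset.coe_image]
    rintro _ ⟨v, -, rfl⟩ _ ⟨w, -, rfl⟩ hvw
    exact closedBall_disjoint_closedBall (by linarith [hsep v w (ne_of_apply_ne _ hvw)])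
  refine le_iSup₂_of_le Z ?_ (le_iSup_of_le hdisj ?_)
  · rintro _ hx
    obtain ⟨v, -, rfl⟩ := Finset.mem_image.1 hx
    rw [mem_closedBall_zero_iff, ← sq_le_one_iff₀ (norm_nonneg _)]
    exact (norm_gridPoint_sq_le (by positivity) v).trans hM
  · simp [Z, Finset.card_image_of_injective _ hinj]

def toUpperHemisphere {m : ℕ} (y : Pt m) : Pt (m + 1) :=
  WithLp.toLp 2 (Fin.snoc (α := fun _ ↦ ℝ) y (√(1 - ‖y‖ ^ 2)))

theorem norm_toUpperHemisphere {m : ℕ} {y : Pt m} (hy : ‖y‖ ≤ 1) :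
    ‖toUpperHemisphere y‖ = 1 := by
  have h : 0 ≤ 1 - ‖y‖ ^ 2 := by nlinarith [norm_nonneg y]
  rw [EuclideanSpace.norm_eq, Fin.sum_univ_castSucc, Real.sqrt_eq_one]
  simp only [toUpperHemisphere, Fin.snoc_castSucc, Fin.snoc_last]
  rw [← EuclideanSpace.norm_sq_eq, Real.norm_eq_abs, sq_abs, Real.sq_sqrt h, add_sub_cancel]

theorem dist_le_dist_toUpperHemisphere {m : ℕ} (y y' : Pt m) :
    dist y y' ≤ dist (toUpperHemisphere y) (toUpperHemisphere y') := by
  rw [EuclideanSpace.dist_eq, EuclideanSpace.dist_eq, Fin.sum_univ_castSucc]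
  refine Real.sqrt_le_sqrt (le_add_of_le_of_nonneg (le_of_eq ?_) (sq_nonneg _))
  simp [toUpperHemisphere]

theorem packingNumber_closedBall_le_packingNumber_sphere {m : ℕ} {δ : ℝ} (hδ : 0 ≤ δ) :
    packingNumber (closedBall (0 : Pt m) 1) δ ≤ packingNumber (sphere (0 : Pt (m + 1)) 1) δ :=
  packingNumber_le_of_mapsTo hδ
    (fun _ hy ↦ mem_sphere_zero_iff_norm.2 (norm_toUpperHemisphere (mem_closedBall_zero_iff.1 hy)))
    fun y _ y' _ ↦ dist_le_dist_toUpperHemisphere y y'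

theorem card_mul_pow_add_pow_le_of_pairwiseDisjoint {E : Type*} [NormedAddCommGroup E]
    [NormedSpace ℝ E] [FiniteDimensional ℝ E] [MeasurableSpace E] [BorelSpace E]
    (μ : Measure E) [μ.IsAddHaarMeasure] {Z : Finset E} {δ : ℝ} (hδ0 : 0 < δ) (hδ1 : δ < 1)
    (hZ : ↑Z ⊆ sphere (0 : E) 1) (hZd : (Z : Set E).PairwiseDisjoint fun x ↦ closedBall x δ) :
    Z.card * δ ^ finrank ℝ E + (1 - δ) ^ finrank ℝ E ≤ (1 + δ) ^ finrank ℝ E := by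
  set d := finrank ℝ E
  set U := ⋃ x ∈ Z, closedBall x δ
  have hnorm : ∀ x ∈ Z, ‖x‖ = 1 := fun x hx ↦ mem_sphere_zero_iff_norm.1 (hZ hx)
  have hU : μ U = Z.card * ENNReal.ofReal (δ ^ d) * μ (ball 0 1) := by
    rw [measure_biUnion_finset hZd fun x _ ↦ measurableSet_closedBall,
      Finset.sum_congr rfl fun x _ ↦ μ.addHaar_closedBall x hδ0.le, Finset.sum_const,
      nsmul_eq_mul, mul_assoc]
  have hdisj : Disjoint U (ball 0 (1 - δ)) := by
    refine Set.disjoint_left.2 fun z hz hz' ↦ ?_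
    obtain ⟨x, hx, hzx⟩ := mem_iUnion₂.1 hz
    have := norm_le_norm_add_norm_sub' x z
    rw [← dist_eq_norm', hnorm x hx] at this
    linarith [mem_ball_zero_iff.1 hz', mem_closedBall.1 hzx]
  have hsub : U ∪ ball 0 (1 - δ) ⊆ closedBall 0 (1 + δ) := by
    refine union_subset (iUnion₂_subset fun x hx ↦ closedBall_subset_closedBall' ?_)
      (ball_subset_closedBall.trans (closedBall_subset_closedBall (by linarith)))
    rw [dist_zero_right, hnorm x hx, add_comm]
  have hvol := measure_mono (μ := μ) hsub
  rw [measure_union hdisj measurableSet_ball, hU,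
    μ.addHaar_ball_of_pos 0 (r := 1 - δ) (by linarith),
    μ.addHaar_closedBall _ (by linarith), ← add_mul, ← ENNReal.ofReal_natCast,
    ← ENNReal.ofReal_mul (by positivity), ← ENNReal.ofReal_add (by positivity)
      (pow_nonneg (by linarith) _),
    ENNReal.mul_le_mul_iff_left (measure_ball_pos μ _ one_pos).ne' measure_ball_lt_top.ne,
    ENNReal.ofReal_le_ofReal_iff (by positivity)] at hvol
  exact hvol

theorem packingNumber_sphere_le {m : ℕ} {δ : ℝ} (hδ0 : 0 < δ) (hδ1 : δ < 1) :
    packingNumber (sphere (0 : Pt (m + 1)) 1) δ ≤ ⌊(m + 1) * 2 ^ (m + 1) / δ ^ m⌋₊ := by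
  refine iSup₂_le fun Z hZ ↦ iSup_le fun hZd ↦ Nat.cast_le.2 (Nat.le_floor ?_)
  have hvol := card_mul_pow_add_pow_le_of_pairwiseDisjoint volume hδ0 hδ1 hZ hZd
  rw [finrank_euclideanSpace_fin] at hvol
  have hshell : (1 + δ) ^ (m + 1) - (1 - δ) ^ (m + 1) ≤ 2 * δ * (m + 1) * 2 ^ m := by
    have := abs_pow_sub_pow_le (1 + δ) (1 - δ) (m + 1)
    rw [abs_of_pos (by linarith : 0 < 1 + δ), abs_of_pos (by linarith : 0 < 1 - δ),
      max_eq_left (by linarith), Nat.add_sub_cancel,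
      abs_of_pos (by linarith : 0 < 1 + δ - (1 - δ))] at this
    refine (le_abs_self _).trans (this.trans ?_)
    push_cast
    gcongr <;> linarith
  rw [le_div_iff₀ (by positivity)]
  refine le_of_mul_le_mul_right ?_ hδ0
  calc Z.card * δ ^ m * δ = Z.card * δ ^ (m + 1) := by ring
    _ ≤ 2 * δ * (m + 1) * 2 ^ m := by linarith
    _ = (m + 1) * 2 ^ (m + 1) * δ := by ring

theorem eventually_packingNumber_sphere_bounds (m : ℕ) : ∀ᶠ δ in 𝓝[>] 0,
    (1 / (6 * (m + 1)) : ℝ) ^ m / δ ^ m ≤ (packingNumber (sphere (0 : Pt (m + 1)) 1) δ).toNat ∧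
      ((packingNumber (sphere (0 : Pt (m + 1)) 1) δ).toNat : ℝ) ≤
        (m + 1) * 2 ^ (m + 1) / δ ^ m := by
  filter_upwards [Ioo_mem_nhdsGT (by positivity : (0 : ℝ) < 1 / (6 * (m + 1)))] with δ ⟨hδ0, hδ⟩
  rw [lt_div_iff₀ (by positivity)] at hδ
  have hδ1 : δ < 1 := by nlinarith [m.cast_nonneg (α := ℝ)]
  have hupper := packingNumber_sphere_le (m := m) hδ0 hδ1
  have hne : packingNumber (sphere (0 : Pt (m + 1)) 1) δ ≠ ⊤ :=
    ne_top_of_le_ne_top (ENat.natCast_ne_top _) hupper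
  constructor
  · set y : ℝ := 3 * δ * (m + 1)
    have hy : 0 < y := by positivity
    set M := ⌊1 / y⌋₊
    have hMy : M * y ≤ 1 := (le_div_iff₀ hy).1 (Nat.floor_le (by positivity))
    have hM : m * (3 * δ * M) ^ 2 ≤ 1 := by
      have h3 : 0 ≤ 3 * δ * M := by positivity
      have : 3 * δ * M * (m + 1) ≤ 1 := by linarith
      nlinarith
    have hpack := (pow_le_packingNumber_closedBall hδ0 hM).trans
      (packingNumber_closedBall_le_packingNumber_sphere hδ0.le)
    have hMm : M ^ m ≤ (packingNumber (sphere (0 : Pt (m + 1)) 1) δ).toNat :=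
      ENat.toNat_natCast (M ^ m) ▸ ENat.toNat_le_toNat hpack hne
    have hMδ : 1 / (6 * (m + 1)) / δ ≤ (M : ℝ) := by
      have hfloor : 1 / y - 1 < M := Nat.sub_one_lt_floor _
      have : 1 / (6 * (m + 1)) / δ = 1 / y / 2 := by field_simp; ring
      have : 2 ≤ 1 / y := by rw [le_div_iff₀ hy]; linarith
      linarith
    calc (1 / (6 * (m + 1)) : ℝ) ^ m / δ ^ m = (1 / (6 * (m + 1)) / δ) ^ m := (div_pow ..).symm
      _ ≤ (M : ℝ) ^ m := by gcongr
      _ ≤ _ := by exact_mod_cast hMm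
  · calc ((packingNumber (sphere (0 : Pt (m + 1)) 1) δ).toNat : ℝ)
        ≤ ⌊(m + 1) * 2 ^ (m + 1) / δ ^ m⌋₊ := by
          exact_mod_cast ENat.toNat_le_toNat hupper (ENat.natCast_ne_top _)
      _ ≤ (m + 1) * 2 ^ (m + 1) / δ ^ m := Nat.floor_le (by positivity)

theorem tendsto_log_div_neg_log_of_bounds {f : ℝ → ℝ} {d : ℕ} {c C : ℝ} (hc : 0 < c)
    (hf : ∀ᶠ δ in 𝓝[>] 0, c / δ ^ d ≤ f δ ∧ f δ ≤ C / δ ^ d) :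
    Tendsto (fun δ ↦ Real.log (f δ) / -Real.log δ) (𝓝[>] 0) (𝓝 d) := by
  have hL : Tendsto (fun δ : ℝ ↦ -Real.log δ) (𝓝[>] 0) atTop :=
    tendsto_neg_atBot_atTop.comp Real.tendsto_log_nhdsGT_zero
  have hbound : ∀ a : ℝ, Tendsto (fun δ ↦ d + Real.log a / -Real.log δ) (𝓝[>] 0) (𝓝 d) := fun a ↦
    by simpa using tendsto_const_nhds.add (tendsto_const_nhds.div_atTop hL)
  have hlog : ∀ a δ : ℝ, 0 < a → 0 < δ → δ < 1 →
      Real.log (a / δ ^ d) / -Real.log δ = d + Real.log a / -Real.log δ := fun a δ ha hδ0 hδ1 ↦ by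
    have : Real.log δ ≠ 0 := (Real.log_neg hδ0 hδ1).ne
    rw [Real.log_div ha.ne' (by positivity), Real.log_pow]
    field_simp
    ring
  have hsandwich : ∀ᶠ δ in 𝓝[>] 0, d + Real.log c / -Real.log δ ≤ Real.log (f δ) / -Real.log δ ∧
      Real.log (f δ) / -Real.log δ ≤ d + Real.log C / -Real.log δ := by
    filter_upwards [hf, Ioo_mem_nhdsGT one_pos] with δ ⟨hlo, hhi⟩ ⟨hδ0, hδ1⟩
    have hL0 : 0 < -Real.log δ := neg_pos.2 (Real.log_neg hδ0 hδ1)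
    have hfpos : 0 < f δ := (by positivity : 0 < c / δ ^ d).trans_le hlo
    have hC : 0 < C := (div_pos_iff_of_pos_right (by positivity)).1 (hfpos.trans_le hhi)
    rw [← hlog c δ hc hδ0 hδ1, ← hlog C δ hC hδ0 hδ1]
    constructor <;> gcongr
  exact tendsto_of_tendsto_of_tendsto_of_le_of_le' (hbound c) (hbound C)
    (hsandwich.mono fun _ h ↦ h.1) (hsandwich.mono fun _ h ↦ h.2)

theorem lowerBoxDim_and_upperBoxDim_eq_of_packingNumber_bounds {n d : ℕ} {F : Set (Pt n)}
    {c C : ℝ} (hc : 0 < c)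
    (h : ∀ᶠ δ in 𝓝[>] 0, c / δ ^ d ≤ (packingNumber F δ).toNat ∧
      ((packingNumber F δ).toNat : ℝ) ≤ C / δ ^ d) :
    lowerBoxDim F = d ∧ upperBoxDim F = d := by
  have := ENNReal.tendsto_ofReal (tendsto_log_div_neg_log_of_bounds hc h)
  rw [ENNReal.ofReal_natCast] at this
  exact ⟨this.liminf_eq, this.limsup_eq⟩

/-- **Example: there is a discrete separated `E ⊆ 𝔻ⁿ` with `L(E) = S^{n-1}` (whence
`dim_H L(E) = dim_B L(E) = n − 1`) but `δ(E) = 0`.** -/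
theorem exists_separated_full_limitSet_critExp_zero {n : ℕ} (hn : 2 ≤ n) :
    ∃ E : Set (Pt n), E ⊆ ball 0 1 ∧ IsDiscreteSet E ∧ SeparatedSet E ∧
      limitSet E = sphere 0 1 ∧
      dimH (limitSet E) = ((n - 1 : ℕ) : ℝ≥0∞) ∧
      lowerBoxDim (limitSet E) = ((n - 1 : ℕ) : ℝ≥0∞) ∧
      upperBoxDim (limitSet E) = ((n - 1 : ℕ) : ℝ≥0∞) ∧
      critExp E = 0 := by
  obtain ⟨m, rfl⟩ : ∃ m, n = m + 1 := ⟨n - 1, by omega⟩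
  have : Nonempty (sphere (0 : Pt (m + 1)) 1) :=
    (NormedSpace.sphere_nonempty.2 zero_le_one).to_subtype
  obtain ⟨u, hu⟩ := TopologicalSpace.exists_dense_seq (sphere (0 : Pt (m + 1)) 1)
  have hball := range_radialPoint_subset_ball (u := u)
  have hsep := separatedSet_range_radialPoint (u := u)
  have hlimit := limitSet_range_radialPoint hu
  obtain ⟨hlower, hupper⟩ := lowerBoxDim_and_upperBoxDim_eq_of_packingNumber_bounds
    (by positivity) (eventually_packingNumber_sphere_bounds m)
  refine ⟨range (radialPoint u), hball, hsep.isDiscreteSet hball, hsep, hlimit, ?_, ?_, ?_,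
    critExp_eq_zero fun _ ↦ accSeries_range_radialPoint_lt_top⟩
  · rw [hlimit, dimH_sphere_eq_finrank_sub_one, finrank_euclideanSpace_fin]
  · rw [hlimit, hlower, Nat.add_sub_cancel]
  · rw [hlimit, hupper, Nat.add_sub_cancel]
end
end
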